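/- arXiv:1411.6215 — 10 statements merged into one kernel-verified Lean document; each statement's English description precedes it below -/
import Mathlib

section
/- Let m ≥ 1 be an integer, q₀ = 2^m and q = 2q₀². Suppose a₁, a₂, b₁, b₂, c₁, c₂, d₁, d₂, r₁, r₂ are natural numbers with 0 ≤ aᵢ ≤ q−1, 0 ≤ bᵢ ≤ 1, 0 ≤ cᵢ ≤ q₀−1, 0 ≤ dᵢ ≤ q₀−1 for i = 1,2, and a₁q + b₁(q+q₀) + c₁(q+2q₀) + d₁(q+2q₀+1) + r₁q² = a₂q + b₂(q+q₀) + c₂(q+2q₀) + d₂(q+2q₀+1) + r₂q². Then a₁ = a₂, b₁ = b₂, c₁ = c₂, d₁ = d₂, and r₁ = r₂. -/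
lemma suzuki_mod_cancel {k u₁ u₂ K₁ K₂ : ℕ} (h : u₁ + k * K₁ = u₂ + k * K₂)
    (h₁ : u₁ < k) (h₂ : u₂ < k) : u₁ = u₂ := by
  have := congrArg (· % k) h
  simpa [Nat.add_mul_mod_self_left, Nat.mod_eq_of_lt h₁, Nat.mod_eq_of_lt h₂] using this

lemma suzuki_bd_lt {b d q₀ : ℕ} (hb : b ≤ 1) (hd : d < q₀) : b * q₀ + d < 2 * q₀ := by
  have : b * q₀ ≤ 1 * q₀ := Nat.mul_le_mul_right _ hb
  omega

lemma suzuki_cq_lt {c q₀ : ℕ} (hc : c < q₀) : 2 * c * q₀ < 2 * q₀ ^ 2 := by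
  nlinarith

theorem suzuki_exponent_injective
    (m q₀ q : ℕ) (hm : 1 ≤ m) (hq₀ : q₀ = 2 ^ m) (hq : q = 2 * q₀ ^ 2)
    (a₁ a₂ b₁ b₂ c₁ c₂ d₁ d₂ r₁ r₂ : ℕ)
    (ha₁ : a₁ ≤ q - 1) (ha₂ : a₂ ≤ q - 1)
    (hb₁ : b₁ ≤ 1) (hb₂ : b₂ ≤ 1)
    (hc₁ : c₁ ≤ q₀ - 1) (hc₂ : c₂ ≤ q₀ - 1)
    (hd₁ : d₁ ≤ q₀ - 1) (hd₂ : d₂ ≤ q₀ - 1)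
    (heq : a₁ * q + b₁ * (q + q₀) + c₁ * (q + 2 * q₀) + d₁ * (q + 2 * q₀ + 1) + r₁ * q ^ 2
         = a₂ * q + b₂ * (q + q₀) + c₂ * (q + 2 * q₀) + d₂ * (q + 2 * q₀ + 1) + r₂ * q ^ 2) :
    a₁ = a₂ ∧ b₁ = b₂ ∧ c₁ = c₂ ∧ d₁ = d₂ ∧ r₁ = r₂ := by
  have h2 : 2 ≤ q₀ := by
    subst hq₀
    calc (2 : ℕ) = 2 ^ 1 := rfl
      _ ≤ 2 ^ m := Nat.pow_le_pow_right (by norm_num) hm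
  subst hq
  have hqpos : 2 ≤ 2 * q₀ ^ 2 := by nlinarith
  have hd₁' : d₁ < q₀ := by omega
  have hd₂' : d₂ < q₀ := by omega
  have hc₁' : c₁ < q₀ := by omega
  have hc₂' : c₂ < q₀ := by omega
  have ha₁' : a₁ < 2 * q₀ ^ 2 := by omega
  have ha₂' : a₂ < 2 * q₀ ^ 2 := by omega
  -- Step 1: d₁ = d₂ via mod q₀
  have key1 : ∀ a b c d r : ℕ,
      a * (2 * q₀ ^ 2) + b * (2 * q₀ ^ 2 + q₀) + c * (2 * q₀ ^ 2 + 2 * q₀)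
        + d * (2 * q₀ ^ 2 + 2 * q₀ + 1) + r * (2 * q₀ ^ 2) ^ 2
      = d + q₀ * (a * (2 * q₀) + b * (2 * q₀ + 1) + c * (2 * q₀ + 2)
          + d * (2 * q₀ + 2) + r * (4 * q₀ ^ 3)) := by
    intros; ring
  have hd : d₁ = d₂ := by
    have h1 := heq
    rw [key1 a₁ b₁ c₁ d₁ r₁, key1 a₂ b₂ c₂ d₂ r₂] at h1
    exact suzuki_mod_cancel h1 hd₁' hd₂'
  subst hd
  -- Step 2: b₁ = b₂ via mod 2q₀
  have key2 : ∀ a b c d r : ℕ,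
      a * (2 * q₀ ^ 2) + b * (2 * q₀ ^ 2 + q₀) + c * (2 * q₀ ^ 2 + 2 * q₀)
        + d * (2 * q₀ ^ 2 + 2 * q₀ + 1) + r * (2 * q₀ ^ 2) ^ 2
      = (b * q₀ + d) + (2 * q₀) * (a * q₀ + b * q₀ + c * (q₀ + 1)
          + d * (q₀ + 1) + r * (2 * q₀ ^ 3)) := by
    intros; ring
  have hb : b₁ = b₂ := by
    have h1 := heq
    rw [key2 a₁ b₁ c₁ d₁ r₁, key2 a₂ b₂ c₂ d₁ r₂] at h1
    have h3 : b₁ * q₀ + d₁ = b₂ * q₀ + d₁ :=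
      suzuki_mod_cancel h1 (suzuki_bd_lt hb₁ hd₁') (suzuki_bd_lt hb₂ hd₁')
    have h4 : b₁ * q₀ = b₂ * q₀ := by omega
    exact Nat.eq_of_mul_eq_mul_right (by omega) h4
  subst hb
  -- Step 3: cancel b,d terms; then c₁ = c₂ via mod 2q₀²
  have heq3 : a₁ * (2 * q₀ ^ 2) + c₁ * (2 * q₀ ^ 2 + 2 * q₀) + r₁ * (2 * q₀ ^ 2) ^ 2
      = a₂ * (2 * q₀ ^ 2) + c₂ * (2 * q₀ ^ 2 + 2 * q₀) + r₂ * (2 * q₀ ^ 2) ^ 2 := by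
    linarith [heq]
  have key3 : ∀ a c r : ℕ,
      a * (2 * q₀ ^ 2) + c * (2 * q₀ ^ 2 + 2 * q₀) + r * (2 * q₀ ^ 2) ^ 2
      = 2 * c * q₀ + (2 * q₀ ^ 2) * (c + (a + (2 * q₀ ^ 2) * r)) := by
    intros; ring
  rw [key3 a₁ c₁ r₁, key3 a₂ c₂ r₂] at heq3
  have hc : c₁ = c₂ := by
    have h3 : 2 * c₁ * q₀ = 2 * c₂ * q₀ :=
      suzuki_mod_cancel heq3 (suzuki_cq_lt hc₁') (suzuki_cq_lt hc₂')
    have := Nat.eq_of_mul_eq_mul_right (show 0 < q₀ by omega) h3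
    omega
  subst hc
  -- Step 4: a₁ = a₂ and r₁ = r₂
  have h6 := Nat.add_left_cancel heq3
  have h7 := Nat.eq_of_mul_eq_mul_left (show 0 < 2 * q₀ ^ 2 by omega) h6
  have h8 := Nat.add_left_cancel h7
  have ha : a₁ = a₂ := suzuki_mod_cancel h8 ha₁' ha₂'
  subst ha
  have h9 := Nat.add_left_cancel h8
  have hr : r₁ = r₂ := Nat.eq_of_mul_eq_mul_left (by omega) h9
  exact ⟨rfl, rfl, rfl, rfl, hr⟩
end

section
/- Let m ≥ 1 be an integer, q₀ = 2^m, q = 2q₀², and let 𝒫 ⊆ ℕ be the additive submonoid generated by q, q+q₀, q+2q₀, and q+2q₀+1. Let ℓ be a natural number with ℓ ≤ q²−1. Then for every n ∈ 𝒫 with n ≤ ℓ(q²+1), there exist natural numbers a, b, c, d, r with 0 ≤ a ≤ q−1, 0 ≤ b ≤ 1, 0 ≤ c ≤ q₀−1, 0 ≤ d ≤ q₀−1, 0 ≤ r ≤ ℓ, and n = aq + b(q+q₀) + c(q+2q₀) + d(q+2q₀+1) + rq². -/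
theorem suzuki_semigroup_representation
    (m q₀ q : ℕ) (hm : 1 ≤ m) (hq₀ : q₀ = 2 ^ m) (hq : q = 2 * q₀ ^ 2)
    (P : AddSubmonoid ℕ)
    (hP : P = AddSubmonoid.closure ({q, q + q₀, q + 2 * q₀, q + 2 * q₀ + 1} : Set ℕ))
    (ℓ : ℕ) (hℓ : ℓ ≤ q ^ 2 - 1)
    (n : ℕ) (hn : n ∈ P) (hn' : n ≤ ℓ * (q ^ 2 + 1)) :
    ∃ a b c d r : ℕ,
      a ≤ q - 1 ∧ b ≤ 1 ∧ c ≤ q₀ - 1 ∧ d ≤ q₀ - 1 ∧ r ≤ ℓ ∧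
      n = a * q + b * (q + q₀) + c * (q + 2 * q₀) + d * (q + 2 * q₀ + 1) + r * q ^ 2 := by
  have hq₀2 : 2 ≤ q₀ := by
    rw [hq₀]
    calc 2 = 2 ^ 1 := rfl
    _ ≤ 2 ^ m := Nat.pow_le_pow_right (by norm_num) hm
  have hq₀pos : 0 < q₀ := by omega
  have hqpos : 0 < q := by rw [hq]; positivity
  obtain ⟨A, B, C, D, hABCD⟩ :
      ∃ A B C D, n = A * q + B * (q + q₀) + C * (q + 2 * q₀) + D * (q + 2 * q₀ + 1) := by
    subst hP
    refine AddSubmonoid.closure_induction (fun x hx => ?_) ⟨0, 0, 0, 0, by ring⟩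
      (fun x y _ _ hx hy => ?_) hn
    · simp only [Set.mem_insert_iff, Set.mem_singleton_iff] at hx
      rcases hx with h | h | h | h <;> subst h
      · exact ⟨1, 0, 0, 0, by ring⟩
      · exact ⟨0, 1, 0, 0, by ring⟩
      · exact ⟨0, 0, 1, 0, by ring⟩
      · exact ⟨0, 0, 0, 1, by ring⟩
    · obtain ⟨Ax, Bx, Cx, Dx, hx'⟩ := hx
      obtain ⟨Ay, By, Cy, Dy, hy'⟩ := hy
      exact ⟨Ax + Ay, Bx + By, Cx + Cy, Dx + Dy, by rw [hx', hy']; ring⟩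
  set k := D / q₀ with hk
  set d := D % q₀ with hd
  set j := (B + k) / 2 with hj
  set b := (B + k) % 2 with hb
  set i := (C + j) / q₀ with hi
  set c := (C + j) % q₀ with hc
  set A3 := A + k * q₀ + j + i * (q₀ + 1) with hA3
  set r := A3 / q with hr
  set a := A3 % q with ha
  have h1 : q₀ * k + d = D := Nat.div_add_mod D q₀
  have h2 : 2 * j + b = B + k := Nat.div_add_mod (B + k) 2
  have h3 : q₀ * i + c = C + j := Nat.div_add_mod (C + j) q₀
  have h4 : q * r + a = A3 := Nat.div_add_mod A3 q
  have key : n = a * q + b * (q + q₀) + c * (q + 2 * q₀) + d * (q + 2 * q₀ + 1) + r * q ^ 2 := by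
    subst hq
    rw [hA3] at h4
    zify at h1 h2 h3 h4 hABCD ⊢
    linear_combination hABCD - ((2 * q₀ ^ 2 : ℤ) + 2 * q₀ + 1) * h1 -
      ((2 * q₀ ^ 2 : ℤ) + q₀) * h2 - ((2 * q₀ ^ 2 : ℤ) + 2 * q₀) * h3 - (2 * q₀ ^ 2 : ℤ) * h4
  have hQ : 0 < q ^ 2 := by positivity
  have hℓ' : ℓ < q ^ 2 := lt_of_le_of_lt hℓ (Nat.sub_lt hQ one_pos)
  have hr_le : r ≤ ℓ := by
    have h5 : r * q ^ 2 ≤ n := by omega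
    have h6 : r * q ^ 2 < (ℓ + 1) * q ^ 2 := by
      have h7 : ℓ * (q ^ 2 + 1) < (ℓ + 1) * q ^ 2 := by nlinarith
      omega
    exact Nat.lt_succ_iff.mp (Nat.lt_of_mul_lt_mul_right h6)
  have ha' : a < q := Nat.mod_lt _ hqpos
  have hb' : b < 2 := Nat.mod_lt _ (by norm_num)
  have hc' : c < q₀ := Nat.mod_lt _ hq₀pos
  have hd' : d < q₀ := Nat.mod_lt _ hq₀pos
  exact ⟨a, b, c, d, r, by omega, by omega, by omega, by omega, hr_le, key⟩
end

section
/- Let m ≥ 1 be an integer, q₀ = 2^m, q = 2q₀², and g = q₀(q−1). Let ℓ be a natural number with 1 ≤ ℓ ≤ q²−1. Then the number of tuples (a, b, c, d, r) of natural numbers satisfying 0 ≤ a ≤ q−1, 0 ≤ b ≤ 1, 0 ≤ c ≤ q₀−1, 0 ≤ d ≤ q₀−1, 0 ≤ r ≤ ℓ, and aq + b(q+q₀) + c(q+2q₀) + d(q+2q₀+1) ≤ rq² + ℓ equals ℓ(q²+1) − g + 1. -/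
/-! The `q²` exponent tuples `(a, b, c, d)` have pairwise distinct weights modulo `q²`, so their
residues run through `0, …, q² - 1`, and every weight is below `2q²`. Hence the tuple of weight `w`
contributes `ℓ + 1 - ⌊w / q²⌋ - [w % q² > ℓ]` values of `r`, and summing over the tuples gives
`q²ℓ + ℓ + 1 - ∑ ⌊w / q²⌋`. The involution `(a, b, c, d) ↦ (q - 1 - a, 1 - b, q₀ - 1 - c, q₀ - 1 - d)`
pairs weights with sum `q² + 2g - 1`, which fixes the total weight; comparing it with the residue
sum `0 + ⋯ + (q² - 1)` gives `∑ ⌊w / q²⌋ = g`. -/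

open Finset

theorem Nat.ModEq.eq_and_modEq_of_add_mul {m n x x' y y' : ℕ} (hx : x < m) (hx' : x' < m)
    (h : x + m * y ≡ x' + m * y' [MOD m * n]) : x = x' ∧ y ≡ y' [MOD n] := by
  have hxx : x = x' := by
    refine Nat.ModEq.eq_of_lt_of_lt ?_ hx hx'
    simpa [Nat.ModEq, Nat.add_mul_mod_self_left] using h.of_mul_right n
  subst hxx
  exact ⟨rfl, Nat.ModEq.mul_left_cancel' (by omega) (Nat.ModEq.add_left_cancel' x h)⟩

theorem Nat.le_mul_add_iff {Q ℓ : ℕ} (hℓ : ℓ < Q) (n r : ℕ) :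
    n ≤ r * Q + ℓ ↔ n / Q + (if ℓ < n % Q then 1 else 0) ≤ r := by
  have hdiv : n / Q * Q + n % Q = n := Nat.div_add_mod' n Q
  have hmod := Nat.mod_lt n (show 0 < Q by omega)
  rcases lt_trichotomy r (n / Q) with hr | rfl | hr
  · have : (r + 1) * Q ≤ n / Q * Q := Nat.mul_le_mul_right Q hr
    rw [add_mul, one_mul] at this
    split_ifs <;> omega
  · split_ifs <;> omega
  · have : (n / Q + 1) * Q ≤ r * Q := Nat.mul_le_mul_right Q hr
    rw [add_mul, one_mul] at this
    split_ifs <;> omega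

theorem Finset.card_range_filter_le (n k : ℕ) : #{r ∈ range n | k ≤ r} = n - k := by
  rw [range_eq_Ico, Ico_filter_le, Nat.card_Ico, Nat.zero_max]

theorem Finset.sum_comp_mod_eq_sum_range {α M : Type*} [AddCommMonoid M] {B : Finset α}
    {f : α → ℕ} {Q : ℕ} (hinj : Set.InjOn (fun t => f t % Q) B) (hcard : #B = Q) (g : ℕ → M) :
    ∑ t ∈ B, g (f t % Q) = ∑ ρ ∈ range Q, g ρ := by
  have himage : B.image (fun t => f t % Q) = range Q := by
    rcases Nat.eq_zero_or_pos Q with rfl | hQ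
    · simp_all
    refine eq_of_subset_of_card_le (fun ρ hρ => ?_) ?_
    · obtain ⟨t, -, rfl⟩ := mem_image.mp hρ
      exact mem_range.mpr (Nat.mod_lt _ hQ)
    · rw [card_image_of_injOn hinj, hcard, card_range]
  rw [← himage, sum_image hinj]

theorem Finset.two_nsmul_sum_eq_card_nsmul {α M : Type*} [AddCommMonoid M] {B : Finset α}
    {f : α → M} {σ : α → α} {c : M} (hσ : ∀ t ∈ B, σ t ∈ B) (hσσ : ∀ t ∈ B, σ (σ t) = t)
    (h : ∀ t ∈ B, f t + f (σ t) = c) : 2 • ∑ t ∈ B, f t = #B • c := by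
  have hperm : ∑ t ∈ B, f (σ t) = ∑ t ∈ B, f t :=
    sum_nbij' σ σ hσ hσ hσσ hσσ (fun _ _ => rfl)
  rw [two_nsmul, ← sum_const, ← sum_congr rfl h, sum_add_distrib, hperm]

theorem Finset.sum_card_filter_le_mul_add {α : Type*} {B : Finset α} {f : α → ℕ} {Q ℓ : ℕ}
    (hinj : Set.InjOn (fun t => f t % Q) B) (hcard : #B = Q) (hℓ : ℓ < Q)
    (hf : ∀ t ∈ B, f t / Q ≤ ℓ) :
    ∑ t ∈ B, #{r ∈ range (ℓ + 1) | f t ≤ r * Q + ℓ} + ∑ t ∈ B, f t / Q = Q * ℓ + ℓ + 1 := by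
  have hterm : ∀ t ∈ B, #{r ∈ range (ℓ + 1) | f t ≤ r * Q + ℓ}
      + (f t / Q + if ℓ < f t % Q then 1 else 0) = ℓ + 1 := by
    intro t ht
    simp_rw [Nat.le_mul_add_iff hℓ, card_range_filter_le]
    have := hf t ht
    split_ifs <;> omega
  have htail : ∑ t ∈ B, (if ℓ < f t % Q then 1 else 0) = Q - (ℓ + 1) := by
    rw [sum_comp_mod_eq_sum_range hinj hcard (fun ρ => if ℓ < ρ then 1 else 0), sum_boole,
      Nat.cast_id, ← card_range_filter_le]
    rfl
  have hsum := sum_congr rfl hterm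
  rw [sum_add_distrib, sum_add_distrib, htail, sum_const, hcard, smul_eq_mul, mul_add] at hsum
  omega

theorem Finset.sum_div_mul_two_add {α : Type*} {B : Finset α} {f : α → ℕ} {Q : ℕ}
    (hinj : Set.InjOn (fun t => f t % Q) B) (hcard : #B = Q) :
    (∑ t ∈ B, f t / Q) * Q * 2 + Q * (Q - 1) = (∑ t ∈ B, f t) * 2 := by
  have hmod : ∑ t ∈ B, f t % Q = ∑ ρ ∈ range Q, ρ := sum_comp_mod_eq_sum_range hinj hcard id
  rw [← sum_range_id_mul_two, ← hmod, sum_mul, ← add_mul, ← sum_add_distrib]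
  simp only [Nat.div_add_mod']

namespace Suzuki

/-- `s` stands for `q₀`. -/
def weight (s q : ℕ) (t : ℕ × ℕ × ℕ × ℕ) : ℕ :=
  t.1 * q + t.2.1 * (q + s) + t.2.2.1 * (q + 2 * s) + t.2.2.2 * (q + 2 * s + 1)

def box (s q : ℕ) : Finset (ℕ × ℕ × ℕ × ℕ) := range q ×ˢ range 2 ×ˢ range s ×ˢ range s

def reflect (s q : ℕ) (t : ℕ × ℕ × ℕ × ℕ) : ℕ × ℕ × ℕ × ℕ :=
  (q - 1 - t.1, 1 - t.2.1, s - 1 - t.2.2.1, s - 1 - t.2.2.2)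

variable {s q : ℕ}

theorem card_box (hq : q = 2 * s ^ 2) : #(box s q) = q ^ 2 := by
  simp only [box, card_product, card_range]
  subst hq
  ring

theorem weight_add (t t' : ℕ × ℕ × ℕ × ℕ) :
    weight s q (t + t') = weight s q t + weight s q t' := by
  simp only [weight, Prod.fst_add, Prod.snd_add]
  ring

theorem weight_eq_mixedRadix (hq : q = 2 * s ^ 2) (a b c d : ℕ) :
    weight s q (a, b, c, d) = d + s * ((b + 2 * c + 2 * s * (a + b + c)) + (2 * s + 2) * d) := by
  subst hq
  simp only [weight]
  ring

theorem injOn_weight_mod (hq : q = 2 * s ^ 2) :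
    Set.InjOn (fun t => weight s q t % q ^ 2) (box s q) := by
  rintro ⟨a, b, c, d⟩ ht ⟨a', b', c', d'⟩ ht' h
  simp only [box, coe_product, coe_range, Set.mem_prod, Set.mem_Iio] at ht ht'
  have hsq : q ^ 2 = s * (2 * s * q) := by subst hq; ring
  change weight s q _ ≡ weight s q _ [MOD q ^ 2] at h
  -- modulo `s * (2s * q)`, the digits `d`, then `b + 2c`, then `a + b + c` (mod `q`) are determined
  rw [weight_eq_mixedRadix hq, weight_eq_mixedRadix hq, hsq] at h
  obtain ⟨rfl, h⟩ := Nat.ModEq.eq_and_modEq_of_add_mul ht.2.2.2 ht'.2.2.2 h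
  obtain ⟨he, h⟩ := Nat.ModEq.eq_and_modEq_of_add_mul (by omega) (by omega)
    (Nat.ModEq.add_right_cancel' _ h)
  obtain ⟨rfl, rfl⟩ : b = b' ∧ c = c' := by omega
  have ha : a = a' :=
    (Nat.ModEq.add_right_cancel' (b + c) (by simpa only [add_assoc] using h)).eq_of_lt_of_lt
      ht.1 ht'.1
  rw [ha]

theorem reflect_mem_box {t : ℕ × ℕ × ℕ × ℕ} (ht : t ∈ box s q) : reflect s q t ∈ box s q := by
  simp only [box, reflect, mem_product, mem_range] at ht ⊢
  omega

theorem reflect_reflect {t : ℕ × ℕ × ℕ × ℕ} (ht : t ∈ box s q) :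
    reflect s q (reflect s q t) = t := by
  simp only [box, mem_product, mem_range] at ht
  simp only [reflect, Prod.ext_iff]
  omega

theorem weight_add_weight_reflect {t : ℕ × ℕ × ℕ × ℕ} (ht : t ∈ box s q) :
    weight s q t + weight s q (reflect s q t) = weight s q (q - 1, 1, s - 1, s - 1) := by
  simp only [box, mem_product, mem_range] at ht
  rw [← weight_add]
  congr 1
  simp only [reflect, Prod.ext_iff, Prod.fst_add, Prod.snd_add]
  omega

theorem weight_top_add_one (hq : q = 2 * s ^ 2) (hs : 0 < s) :
    weight s q (q - 1, 1, s - 1, s - 1) + 1 = q ^ 2 + 2 * (s * (q - 1)) := by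
  have hq1 : 1 ≤ q := by subst hq; nlinarith
  simp only [weight]
  zify [hq1, hs]
  subst hq
  push_cast
  ring

theorem weight_div_le_one (hq : q = 2 * s ^ 2) (hs : 0 < s) {t : ℕ × ℕ × ℕ × ℕ}
    (ht : t ∈ box s q) : weight s q t / q ^ 2 ≤ 1 := by
  have htop := weight_top_add_one hq hs
  have hrefl := weight_add_weight_reflect ht
  have hg : 2 * (s * (q - 1)) ≤ q ^ 2 := by
    have : s * (q - 1) ≤ s * q := Nat.mul_le_mul_left s (Nat.sub_le q 1)
    subst hq; nlinarith
  exact Nat.le_of_lt_succ (Nat.div_lt_of_lt_mul (by omega))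

theorem sum_weight_div (hq : q = 2 * s ^ 2) (hs : 0 < s) :
    ∑ t ∈ box s q, weight s q t / q ^ 2 = s * (q - 1) := by
  have hres := sum_div_mul_two_add (injOn_weight_mod hq) (card_box hq)
  have hsymm := two_nsmul_sum_eq_card_nsmul (fun t => reflect_mem_box) (fun t => reflect_reflect)
    (fun t => weight_add_weight_reflect (s := s) (q := q) (t := t))
  rw [card_box hq, smul_eq_mul, smul_eq_mul] at hsymm
  have htop := weight_top_add_one hq hs
  have hQ : 0 < q ^ 2 := by subst hq; positivity
  have hW : weight s q (q - 1, 1, s - 1, s - 1) = q ^ 2 - 1 + 2 * (s * (q - 1)) := by omega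
  rw [hW, mul_add] at hsymm
  apply Nat.eq_of_mul_eq_mul_left hQ
  linarith

theorem ncard_eq_sum_card (hs : 0 < s) (hq : 0 < q) (ℓ : ℕ) :
    Set.ncard {t : ℕ × ℕ × ℕ × ℕ × ℕ |
        t.1 ≤ q - 1 ∧ t.2.1 ≤ 1 ∧ t.2.2.1 ≤ s - 1 ∧ t.2.2.2.1 ≤ s - 1 ∧ t.2.2.2.2 ≤ ℓ ∧
        t.1 * q + t.2.1 * (q + s) + t.2.2.1 * (q + 2 * s) + t.2.2.2.1 * (q + 2 * s + 1)
          ≤ t.2.2.2.2 * q ^ 2 + ℓ}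
      = ∑ t ∈ box s q, #{r ∈ range (ℓ + 1) | weight s q t ≤ r * q ^ 2 + ℓ} := by
  have hset : {t : ℕ × ℕ × ℕ × ℕ × ℕ |
        t.1 ≤ q - 1 ∧ t.2.1 ≤ 1 ∧ t.2.2.1 ≤ s - 1 ∧ t.2.2.2.1 ≤ s - 1 ∧ t.2.2.2.2 ≤ ℓ ∧
        t.1 * q + t.2.1 * (q + s) + t.2.2.1 * (q + 2 * s) + t.2.2.2.1 * (q + 2 * s + 1)
          ≤ t.2.2.2.2 * q ^ 2 + ℓ}
      = ↑({t ∈ range q ×ˢ range 2 ×ˢ range s ×ˢ range s ×ˢ range (ℓ + 1) |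
          weight s q (t.1, t.2.1, t.2.2.1, t.2.2.2.1) ≤ t.2.2.2.2 * q ^ 2 + ℓ} : Finset _) := by
    ext t
    rw [Finset.mem_coe, Finset.mem_filter]
    simp only [Set.mem_ofPred_eq, mem_product, mem_range, weight]
    omega
  rw [hset, Set.ncard_coe_finset, card_filter, box]
  simp only [sum_product, card_filter]

end Suzuki

theorem suzuki_riemann_roch_dimension_general
    (m q₀ q g : ℕ) (hq₀ : q₀ = 2 ^ m) (hq : q = 2 * q₀ ^ 2)
    (hg : g = q₀ * (q - 1))
    (ℓ : ℕ) (hℓ1 : 1 ≤ ℓ) (hℓ2 : ℓ ≤ q ^ 2 - 1) :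
    Set.ncard {t : ℕ × ℕ × ℕ × ℕ × ℕ |
        t.1 ≤ q - 1 ∧ t.2.1 ≤ 1 ∧ t.2.2.1 ≤ q₀ - 1 ∧ t.2.2.2.1 ≤ q₀ - 1 ∧ t.2.2.2.2 ≤ ℓ ∧
        t.1 * q + t.2.1 * (q + q₀) + t.2.2.1 * (q + 2 * q₀) + t.2.2.2.1 * (q + 2 * q₀ + 1)
          ≤ t.2.2.2.2 * q ^ 2 + ℓ}
      = ℓ * (q ^ 2 + 1) - g + 1 := by
  have hq₀pos : 0 < q₀ := hq₀ ▸ Nat.two_pow_pos m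
  have hqpos : 0 < q := by rw [hq]; positivity
  have hcount := sum_card_filter_le_mul_add (Suzuki.injOn_weight_mod hq) (Suzuki.card_box hq)
    (by omega : ℓ < q ^ 2) (fun t ht => (Suzuki.weight_div_le_one hq hq₀pos ht).trans hℓ1)
  rw [Suzuki.sum_weight_div hq hq₀pos, ← hg] at hcount
  have hgq : g ≤ q ^ 2 := by
    rw [hg, sq]; exact Nat.mul_le_mul (by rw [hq]; nlinarith) (Nat.sub_le q 1)
  rw [Suzuki.ncard_eq_sum_card hq₀pos hqpos, mul_add, mul_one, mul_comm ℓ]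
  have hqℓ := Nat.le_mul_of_pos_right (q ^ 2) hℓ1
  omega

theorem suzuki_riemann_roch_dimension
    (m q₀ q g : ℕ) (hm : 1 ≤ m) (hq₀ : q₀ = 2 ^ m) (hq : q = 2 * q₀ ^ 2)
    (hg : g = q₀ * (q - 1))
    (ℓ : ℕ) (hℓ1 : 1 ≤ ℓ) (hℓ2 : ℓ ≤ q ^ 2 - 1) :
    Set.ncard {t : ℕ × ℕ × ℕ × ℕ × ℕ |
        t.1 ≤ q - 1 ∧ t.2.1 ≤ 1 ∧ t.2.2.1 ≤ q₀ - 1 ∧ t.2.2.2.1 ≤ q₀ - 1 ∧ t.2.2.2.2 ≤ ℓ ∧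
        t.1 * q + t.2.1 * (q + q₀) + t.2.2.1 * (q + 2 * q₀) + t.2.2.2.1 * (q + 2 * q₀ + 1)
          ≤ t.2.2.2.2 * q ^ 2 + ℓ}
      = ℓ * (q ^ 2 + 1) - g + 1 :=
  suzuki_riemann_roch_dimension_general m q₀ q g hq₀ hq hg ℓ hℓ1 hℓ2
end

section
/- Let m ≥ 1 be an integer, q₀ = 2^m, q = 2q₀², and let 𝒫 ⊆ ℕ be the additive submonoid generated by q, q+q₀, q+2q₀, and q+2q₀+1. Then the set of natural numbers not belonging to 𝒫 has exactly q₀(q−1) elements. -/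
/-!
A sum of generators of `𝒫` has the form `(2q₀s + t)q₀ + u` with `2u ≤ t ≤ 2s`, where `s` counts
the generators, `t` their `q₀`'s and `u` their `1`'s. Writing `n = (2q₀A + B)q₀ + C` in mixed
radix (`B < 2q₀`, `C < q₀`) and carrying `u` into the middle digit, membership `n ∈ 𝒫` becomes
`2C ≤ B ≤ 2A ∨ B + 2q₀ + 2 ≤ 2A`. So for each of the `2q₀²` digit pairs `(B, C)` the gaps are
the `A < ⌈B/2⌉ + [B < 2C](q₀ + 1)`, and summing gives `q₀³ + (q₀ - 1)q₀(q₀ + 1) = q₀(2q₀² - 1)`.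
-/

open Finset

theorem AddSubmonoid.mem_closure_four {M : Type*} [AddCommMonoid M] {a b c d x : M} :
    x ∈ closure ({a, b, c, d} : Set M) ↔ ∃ i j k l : ℕ, i • a + j • b + k • c + l • d = x := by
  simp only [Set.insert_eq, closure_union, mem_sup, mem_closure_singleton]
  constructor
  · rintro ⟨_, ⟨i, rfl⟩, _, ⟨_, ⟨j, rfl⟩, _, ⟨_, ⟨k, rfl⟩, _, ⟨l, rfl⟩, rfl⟩, rfl⟩, rfl⟩
    exact ⟨i, j, k, l, by abel⟩
  · rintro ⟨i, j, k, l, rfl⟩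
    exact ⟨_, ⟨i, rfl⟩, _, ⟨_, ⟨j, rfl⟩, _, ⟨_, ⟨k, rfl⟩, _, ⟨l, rfl⟩, rfl⟩, rfl⟩, by abel⟩

theorem Nat.eq_and_eq_of_mul_add_eq_mul_add {k a b c d : ℕ} (hb : b < k) (hd : d < k)
    (h : a * k + b = c * k + d) : a = c ∧ b = d := by
  have hk : 0 < k := by omega
  have hmod := congrArg (· % k) h
  have hdiv := congrArg (· / k) h
  simp only [add_comm _ b, add_comm _ d, Nat.add_mul_mod_self_right, Nat.mod_eq_of_lt hb,
    Nat.mod_eq_of_lt hd, Nat.add_mul_div_right _ _ hk, Nat.div_eq_of_lt hb,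
    Nat.div_eq_of_lt hd, zero_add] at hmod hdiv
  exact ⟨hdiv, hmod⟩

def suzukiSemigroup (q₀ : ℕ) : AddSubmonoid ℕ :=
  AddSubmonoid.closure {2 * q₀ ^ 2, 2 * q₀ ^ 2 + q₀, 2 * q₀ ^ 2 + 2 * q₀, 2 * q₀ ^ 2 + 2 * q₀ + 1}

theorem mem_suzukiSemigroup_iff {q₀ n : ℕ} :
    n ∈ suzukiSemigroup q₀ ↔
      ∃ s t u, 2 * u ≤ t ∧ t ≤ 2 * s ∧ (s * (2 * q₀) + t) * q₀ + u = n := by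
  simp only [suzukiSemigroup, AddSubmonoid.mem_closure_four, smul_eq_mul]
  constructor
  · rintro ⟨i, j, k, l, rfl⟩
    exact ⟨i + j + k + l, j + 2 * k + 2 * l, l, by omega, by omega, by ring⟩
  · rintro ⟨s, t, u, hut, hts, rfl⟩
    obtain ⟨k, j, hj, rfl⟩ : ∃ k j, j ≤ 1 ∧ t = j + 2 * k + 2 * u :=
      ⟨(t - 2 * u) / 2, (t - 2 * u) % 2, by omega, by omega⟩
    obtain ⟨i, rfl⟩ : ∃ i, s = i + j + k + u := ⟨s - j - k - u, by omega⟩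
    exact ⟨i, j, k, u, by ring⟩

theorem mem_suzukiSemigroup_digits_iff {q₀ A B C : ℕ} (hC : C < q₀) :
    (A * (2 * q₀) + B) * q₀ + C ∈ suzukiSemigroup q₀ ↔
      ∃ s t u, 2 * (u * q₀ + C) ≤ t ∧ t ≤ 2 * s ∧ s * (2 * q₀) + t + u = A * (2 * q₀) + B := by
  rw [mem_suzukiSemigroup_iff]
  constructor
  · rintro ⟨s, t, u, hut, hts, h⟩
    rw [← Nat.div_add_mod' u q₀, ← add_assoc, ← add_mul] at h
    obtain ⟨hdiv, hmod⟩ :=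
      Nat.eq_and_eq_of_mul_add_eq_mul_add (Nat.mod_lt u (by omega)) hC h
    refine ⟨s, t, u / q₀, ?_, hts, hdiv⟩
    rw [← hmod, Nat.div_add_mod']
    exact hut
  · rintro ⟨s, t, u, hut, hts, h⟩
    exact ⟨s, t, u * q₀ + C, hut, hts, by rw [← h]; ring⟩

theorem exists_reduced_rep_iff {q₀ A B C : ℕ} (hC : C < q₀) (hB : B < 2 * q₀) :
    (∃ s t u, 2 * (u * q₀ + C) ≤ t ∧ t ≤ 2 * s ∧ s * (2 * q₀) + t + u = A * (2 * q₀) + B) ↔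
      2 * C ≤ B ∧ B ≤ 2 * A ∨ B + 2 * q₀ + 2 ≤ 2 * A := by
  constructor
  · rintro ⟨s, t, u, hut, hts, h⟩
    obtain ⟨j, rfl⟩ : ∃ j, A = s + j := by
      refine ⟨A - s, (Nat.add_sub_cancel' ?_).symm⟩
      by_contra! hAs
      have := Nat.mul_le_mul_right (2 * q₀) hAs
      rw [Nat.succ_mul] at this
      omega
    -- `j` is the carry of `t + u` into the top digit; `2uq₀ ≤ t` forces `u ≤ j`.
    have hj : t + u = 2 * (j * q₀) + B := by
      have : (s + j) * (2 * q₀) = s * (2 * q₀) + 2 * (j * q₀) := by ring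
      omega
    have huj : u ≤ j := by
      by_contra! hju
      have := Nat.mul_le_mul_right q₀ hju
      rw [Nat.succ_mul] at this
      omega
    obtain rfl | rfl | hj2 : j = 0 ∨ j = 1 ∨ 2 ≤ j := by omega
    · obtain rfl : u = 0 := by omega
      omega
    · obtain rfl | rfl : u = 0 ∨ u = 1 := by omega
      all_goals simp only [zero_mul, one_mul] at hut hj; omega
    · have := Nat.mul_le_mul_right q₀ hj2
      omega
  · rintro (⟨hCB, hBA⟩ | hBA)
    · exact ⟨A, B, 0, by omega, hBA, by ring⟩
    · refine ⟨A - 1, B + 2 * q₀, 0, by omega, by omega, ?_⟩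
      obtain ⟨A, rfl⟩ : ∃ A', A = A' + 1 := ⟨A - 1, by omega⟩
      rw [add_tsub_cancel_right]
      ring

def columnGaps (q₀ B C : ℕ) : ℕ :=
  (B + 1) / 2 + if B < 2 * C then q₀ + 1 else 0

theorem notMem_suzukiSemigroup_iff {q₀ A B C : ℕ} (hC : C < q₀) (hB : B < 2 * q₀) :
    (A * (2 * q₀) + B) * q₀ + C ∉ suzukiSemigroup q₀ ↔ A < columnGaps q₀ B C := by
  rw [mem_suzukiSemigroup_digits_iff hC, exists_reduced_rep_iff hC hB, columnGaps]
  split_ifs <;> omega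

theorem sum_range_two_mul_succ_div_two (n : ℕ) : ∑ i ∈ range (2 * n), (i + 1) / 2 = n ^ 2 := by
  induction n with
  | zero => simp
  | succ n ih =>
    rw [show 2 * (n + 1) = 2 * n + 1 + 1 by ring, sum_range_succ, sum_range_succ, ih]
    have : (2 * n + 1 + 1) / 2 = n + 1 := by omega
    rw [this, show (2 * n + 1) / 2 = n by omega]
    ring

theorem sum_range_columnGaps {q₀ C : ℕ} (hC : C ≤ q₀) :
    ∑ B ∈ range (2 * q₀), columnGaps q₀ B C = q₀ ^ 2 + 2 * C * (q₀ + 1) := by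
  have hfilter : {B ∈ range (2 * q₀) | B < 2 * C} = range (2 * C) := by
    ext B
    simp only [mem_filter, mem_range]
    omega
  simp only [columnGaps, sum_add_distrib, sum_range_two_mul_succ_div_two, sum_ite, hfilter,
    sum_const, card_range, smul_eq_mul, mul_zero, add_zero]
  ring

theorem sum_columnGaps (q₀ : ℕ) :
    ∑ x : Fin (2 * q₀) × Fin q₀, columnGaps q₀ x.1 x.2 = q₀ * (2 * q₀ ^ 2 - 1) := by
  rw [Fintype.sum_prod_type_right,
    Fin.sum_univ_eq_sum_range (fun C => ∑ B : Fin (2 * q₀), columnGaps q₀ B C),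
    sum_congr rfl fun C hC => (Fin.sum_univ_eq_sum_range (columnGaps q₀ · C) _).trans
      (sum_range_columnGaps (mem_range.1 hC).le), sum_add_distrib,
    sum_const, card_range, smul_eq_mul, ← sum_mul, ← mul_sum, mul_comm 2, sum_range_id_mul_two]
  rcases q₀ with _ | k
  · simp
  · rw [show 2 * (k + 1) ^ 2 - 1 = 2 * k ^ 2 + 4 * k + 1 by ring_nf; omega, add_tsub_cancel_right]
    ring

def digitsEquiv (q₀ : ℕ) [NeZero q₀] : ℕ ≃ ℕ × Fin (2 * q₀) × Fin q₀ :=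
  ((Nat.divModEquiv q₀).trans ((Nat.divModEquiv (2 * q₀)).prodCongr (Equiv.refl _))).trans
    (Equiv.prodAssoc _ _ _)

theorem digitsEquiv_symm_apply (q₀ : ℕ) [NeZero q₀] (A : ℕ) (B : Fin (2 * q₀)) (C : Fin q₀) :
    (digitsEquiv q₀).symm (A, B, C) = (A * (2 * q₀) + B) * q₀ + C := rfl

theorem Set.ncard_setOf_fst_lt {ι : Type*} [Fintype ι] (f : ι → ℕ) :
    {p : ℕ × ι | p.1 < f p.2}.ncard = ∑ i, f i := by
  have : {p : ℕ × ι | p.1 < f p.2} =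
      ((Finset.univ.sigma fun i => Finset.range (f i)).map (Equiv.sigmaEquivProd ι ℕ |>.trans
        (Equiv.prodComm ι ℕ)).toEmbedding : Set (ℕ × ι)) := by
    ext ⟨a, i⟩
    simp
  rw [this, Set.ncard_coe_finset, card_map, card_sigma]
  simp

theorem ncard_setOf_notMem_suzukiSemigroup (q₀ : ℕ) :
    {n | n ∉ suzukiSemigroup q₀}.ncard = q₀ * (2 * q₀ ^ 2 - 1) := by
  rcases Nat.eq_zero_or_pos q₀ with rfl | hq₀
  · have hall (n : ℕ) : n ∈ suzukiSemigroup 0 :=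
      mem_suzukiSemigroup_iff.2 ⟨n, 2 * n, n, le_rfl, le_rfl, by ring⟩
    simp [hall]
  have := NeZero.of_pos hq₀
  have hgaps : {n | n ∉ suzukiSemigroup q₀} =
      (digitsEquiv q₀).symm '' {p | p.1 < columnGaps q₀ p.2.1 p.2.2} := by
    ext n
    obtain ⟨⟨A, B, C⟩, rfl⟩ := (digitsEquiv q₀).symm.surjective n
    rw [Set.mem_ofPred_eq, (digitsEquiv q₀).symm.injective.mem_set_image,
      digitsEquiv_symm_apply, notMem_suzukiSemigroup_iff C.2 B.2]
    rfl
  rw [hgaps, Set.ncard_image_of_injective _ (Equiv.injective _), ← sum_columnGaps]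
  exact Set.ncard_setOf_fst_lt fun x : Fin (2 * q₀) × Fin q₀ => columnGaps q₀ x.1 x.2

theorem suzuki_semigroup_gap_count_general
    (q₀ q : ℕ) (hq : q = 2 * q₀ ^ 2)
    (P : AddSubmonoid ℕ)
    (hP : P = AddSubmonoid.closure ({q, q + q₀, q + 2 * q₀, q + 2 * q₀ + 1} : Set ℕ)) :
    Set.ncard {n : ℕ | n ∉ P} = q₀ * (q - 1) := by
  subst hq hP
  exact ncard_setOf_notMem_suzukiSemigroup q₀

theorem suzuki_semigroup_gap_count
    (m q₀ q : ℕ) (hm : 1 ≤ m) (hq₀ : q₀ = 2 ^ m) (hq : q = 2 * q₀ ^ 2)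
    (P : AddSubmonoid ℕ)
    (hP : P = AddSubmonoid.closure ({q, q + q₀, q + 2 * q₀, q + 2 * q₀ + 1} : Set ℕ)) :
    Set.ncard {n : ℕ | n ∉ P} = q₀ * (q - 1) :=
  suzuki_semigroup_gap_count_general q₀ q hq P hP
end

section
/- Let m ≥ 1 be an integer, q₀ = 2^m, q = 2q₀², and let 𝒫 ⊆ ℕ be the additive submonoid generated by q, q+q₀, q+2q₀, and q+2q₀+1. Then 2q₀(q−1) − 1 ∉ 𝒫, and every natural number n with n ≥ 2q₀(q−1) belongs to 𝒫. -/
/-!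
Write `g = q₀`, so the generators are `g·2g`, `g(2g+1)`, `g(2g+2)` and `g(2g+2)+1`. In a representation
`n = g·m + d·(q+2g+1)` with `m` a sum of `s` terms from `{2g, 2g+1, 2g+2}` — that is, `2g·s ≤ m ≤ (2g+2)·s` —
the coefficient `d` is congruent to `n` modulo `g`, and the semigroup of such `m` contains every
`m ≥ 2g²` but not `2g² - 1`. For `n ≥ 4g³ - 2g` take `d = n mod g`; the remaining `m` is then at least
`2g²`. For `n = 4g³ - 2g - 1` size forces `d = g - 1`, which leaves exactly `m = 2g² - 1`.
-/

theorem AddSubmonoid.mem_closure_insert {A : Type*} [AddCommMonoid A] {x y : A} {s : Set A} :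
    y ∈ closure (insert x s) ↔ ∃ n : ℕ, ∃ z ∈ closure s, n • x + z = y := by
  rw [Set.insert_eq, closure_union, mem_sup]
  simp_rw [mem_closure_singleton, exists_exists_eq_and]

theorem Nat.mem_closure_four {w x y z n : ℕ} :
    n ∈ AddSubmonoid.closure ({w, x, y, z} : Set ℕ) ↔
      ∃ a b c d : ℕ, a * w + b * x + c * y + d * z = n := by
  simp only [AddSubmonoid.mem_closure_insert, AddSubmonoid.mem_closure_singleton, smul_eq_mul]
  constructor
  · rintro ⟨a, _, ⟨b, _, ⟨c, _, ⟨d, rfl⟩, rfl⟩, rfl⟩, rfl⟩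
    exact ⟨a, b, c, d, by ring⟩
  · rintro ⟨a, b, c, d, rfl⟩
    exact ⟨a, _, ⟨b, _, ⟨c, _, ⟨d, rfl⟩, rfl⟩, rfl⟩, by ring⟩

theorem exists_consecutive_sum_iff {k m : ℕ} :
    (∃ a b c : ℕ, a * k + b * (k + 1) + c * (k + 2) = m) ↔
      ∃ s, k * s ≤ m ∧ m ≤ (k + 2) * s := by
  constructor
  · rintro ⟨a, b, c, rfl⟩
    exact ⟨a + b + c, by nlinarith, by nlinarith⟩
  · rintro ⟨s, hks, hm⟩
    obtain ⟨t, rfl⟩ := Nat.exists_eq_add_of_le hks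
    rcases le_total t s with hts | hst
    · obtain ⟨u, rfl⟩ := Nat.exists_eq_add_of_le hts
      exact ⟨u, t, 0, by ring⟩
    · obtain ⟨v, rfl⟩ := Nat.exists_eq_add_of_le hst
      obtain ⟨w, rfl⟩ : ∃ w, s = v + w := Nat.exists_eq_add_of_le (by nlinarith)
      exact ⟨0, w, v, by ring⟩

theorem exists_mul_le_le_add_two_mul_of_mul_self_le {k m : ℕ} (hk : 0 < k) (h : k * k ≤ 2 * m) :
    ∃ s, k * s ≤ m ∧ m ≤ (k + 2) * s := by
  refine ⟨m / k, Nat.mul_div_le m k, ?_⟩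
  have hm := Nat.div_add_mod m k
  have hr := Nat.mod_lt m hk
  have : k ≤ 2 * (m / k) + 1 := by nlinarith
  nlinarith

theorem not_mul_le_and_le_add_two_mul {g m s : ℕ} (hm : m + 1 = 2 * g * g) :
    ¬(2 * g * s ≤ m ∧ m ≤ (2 * g + 2) * s) := by
  rintro ⟨hlo, hhi⟩
  rcases lt_or_ge s g with hs | hs
  · nlinarith
  · nlinarith

theorem not_exists_suzuki_repr_frobenius {g : ℕ} (hg : 0 < g) :
    ¬∃ a b c d : ℕ, a * (2 * g ^ 2) + b * (2 * g ^ 2 + g) + c * (2 * g ^ 2 + 2 * g)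
      + d * (2 * g ^ 2 + 2 * g + 1) = 2 * g * (2 * g ^ 2 - 1) - 1 := by
  rintro ⟨a, b, c, d, h⟩
  obtain ⟨m, hm⟩ : ∃ m, a * (2 * g) + b * (2 * g + 1) + c * (2 * g + 2) = m := ⟨_, rfl⟩
  have hsum : g * m + d * (2 * g ^ 2 + 2 * g + 1) + (2 * g + 1) = 4 * g ^ 3 := by
    rw [← hm]
    have h1 : 1 ≤ 2 * g ^ 2 := by nlinarith
    have h2 : 1 ≤ 2 * g * (2 * g ^ 2 - 1) := by
      have : 1 ≤ 2 * g ^ 2 - 1 := by omega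
      nlinarith
    zify [h1, h2] at h ⊢
    linear_combination h
  have hdvd : g ∣ d + 1 := by
    have : g * (m + d * (2 * g + 2) + 2) + (d + 1) = g * (4 * g ^ 2) := by linear_combination hsum
    exact (Nat.dvd_add_right (dvd_mul_right g _)).mp (this ▸ dvd_mul_right g _)
  have hd : d + 1 = g := by
    obtain ⟨j, hj⟩ := hdvd
    have hj2 : j < 2 := by nlinarith
    interval_cases j <;> omega
  have hm1 : m + 1 = 2 * g * g := by
    subst hd
    nlinarith
  obtain ⟨s, hs⟩ := exists_consecutive_sum_iff.mp ⟨a, b, c, hm⟩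
  exact not_mul_le_and_le_add_two_mul hm1 hs

theorem exists_suzuki_repr_of_le {g n : ℕ} (hg : 0 < g) (hn : 2 * g * (2 * g ^ 2 - 1) ≤ n) :
    ∃ a b c d : ℕ, a * (2 * g ^ 2) + b * (2 * g ^ 2 + g) + c * (2 * g ^ 2 + 2 * g)
      + d * (2 * g ^ 2 + 2 * g + 1) = n := by
  have hn' : 4 * g ^ 3 ≤ n + 2 * g := by
    have h1 : 1 ≤ 2 * g ^ 2 := by nlinarith
    zify [h1] at hn ⊢
    linarith
  have hr : n % g < g := Nat.mod_lt n hg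
  have hdiv := Nat.div_add_mod n g
  obtain ⟨m, hm⟩ : ∃ m, n / g = m + n % g * (2 * g + 2) := by
    refine Nat.exists_eq_add_of_le' ((Nat.le_div_iff_mul_le hg).mpr ?_)
    have := Nat.mul_le_mul_right ((2 * g + 2) * g) (Nat.succ_le_of_lt hr)
    nlinarith
  have hn_eq : g * m + n % g * (2 * g ^ 2 + 2 * g + 1) = n := by
    rw [hm] at hdiv
    linear_combination hdiv
  have hm_ge : 2 * g * g ≤ m := by nlinarith
  obtain ⟨a, b, c, habc⟩ := exists_consecutive_sum_iff.mpr <|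
    exists_mul_le_le_add_two_mul_of_mul_self_le (k := 2 * g) (m := m) (by omega) (by nlinarith)
  exact ⟨a, b, c, n % g, by rw [← habc] at hn_eq; linear_combination hn_eq⟩

theorem suzuki_semigroup_frobenius_number_general
    (m q₀ q : ℕ) (hq₀ : q₀ = 2 ^ m) (hq : q = 2 * q₀ ^ 2)
    (P : AddSubmonoid ℕ)
    (hP : P = AddSubmonoid.closure ({q, q + q₀, q + 2 * q₀, q + 2 * q₀ + 1} : Set ℕ)) :
    2 * q₀ * (q - 1) - 1 ∉ P ∧ ∀ n : ℕ, 2 * q₀ * (q - 1) ≤ n → n ∈ P := by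
  have hq₀_pos : 0 < q₀ := hq₀ ▸ Nat.two_pow_pos m
  subst hq hP
  simp only [Nat.mem_closure_four]
  exact ⟨not_exists_suzuki_repr_frobenius hq₀_pos, fun n hn => exists_suzuki_repr_of_le hq₀_pos hn⟩

theorem suzuki_semigroup_frobenius_number
    (m q₀ q : ℕ) (hm : 1 ≤ m) (hq₀ : q₀ = 2 ^ m) (hq : q = 2 * q₀ ^ 2)
    (P : AddSubmonoid ℕ)
    (hP : P = AddSubmonoid.closure ({q, q + q₀, q + 2 * q₀, q + 2 * q₀ + 1} : Set ℕ)) :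
    2 * q₀ * (q - 1) - 1 ∉ P ∧ ∀ n : ℕ, 2 * q₀ * (q - 1) ≤ n → n ∈ P :=
  suzuki_semigroup_frobenius_number_general m q₀ q hq₀ hq P hP
end

section
/- Let m ≥ 1 be an integer, q₀ = 2^m, q = 2q₀², and let F be a finite field with q elements. Then the number of pairs (α, β) ∈ F × F satisfying β^q + β = α^{q₀+q} + α^{q₀+1} equals q². -/
theorem suzuki_affine_point_count_5
    (m q₀ q : ℕ) (hm : 1 ≤ m) (hq₀ : q₀ = 2 ^ m) (hq : q = 2 * q₀ ^ 2)
    (F : Type*) [Field F] [Fintype F] (hF : Fintype.card F = q ^ 1) :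
    Set.ncard {p : F × F | p.2 ^ q + p.2 = p.1 ^ (q₀ + q) + p.1 ^ (q₀ + 1)} = q ^ 2 := by
  have hq2 : q = 2 ^ (2 * m + 1) := by subst hq₀; rw [hq]; ring
  have h2 : (2 : F) = 0 := by
    have hc : ((Fintype.card F : F)) = 0 := FiniteField.cast_card_eq_zero F
    rw [hF, pow_one, hq2] at hc
    push_cast at hc
    exact pow_eq_zero_iff (by positivity) |>.mp hc
  have hpow : ∀ x : F, x ^ q = x := by
    intro x
    have := FiniteField.pow_card x
    rwa [hF, pow_one] at this
  have hset : {p : F × F | p.2 ^ q + p.2 = p.1 ^ (q₀ + q) + p.1 ^ (q₀ + 1)} = Set.univ := by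
    ext p
    simp only [Set.mem_setOf_eq, Set.mem_univ, iff_true]
    have hchar : ∀ x : F, x + x = 0 := by
      intro x; have := two_mul x; rw [h2, zero_mul] at this; exact this.symm
    rw [hpow p.2, pow_add, pow_add, hpow p.1, pow_one, hchar, hchar]
  rw [hset, Set.ncard_univ, Nat.card_eq_fintype_card, Fintype.card_prod, hF, pow_one]
  ring
end

section
/- Let m ≥ 1 be an integer, q₀ = 2^m, q = 2q₀², and let F be a finite field with q² elements. Then the number of pairs (α, β) ∈ F × F satisfying β^q + β = α^{q₀+q} + α^{q₀+1} equals q². -/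
open Polynomial

theorem suzuki_affine_point_count_6
    (m q₀ q : ℕ) (hm : 1 ≤ m) (hq₀ : q₀ = 2 ^ m) (hq : q = 2 * q₀ ^ 2)
    (F : Type*) [Field F] [Fintype F] (hF : Fintype.card F = q ^ 2) :
    Set.ncard {p : F × F | p.2 ^ q + p.2 = p.1 ^ (q₀ + q) + p.1 ^ (q₀ + 1)} = q ^ 2 := by
  classical
  -- basic numerology
  have hqpow : q = 2 ^ (2 * m + 1) := by subst hq₀; rw [hq]; ring
  have hq1 : 1 < q := by rw [hqpow]; exact Nat.one_lt_two_pow (by omega)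
  -- characteristic 2
  obtain ⟨p, hp⟩ := CharP.exists F
  haveI := hp
  haveI hpF : Fact p.Prime := ⟨CharP.char_is_prime F p⟩
  have hp2 : p = 2 := by
    obtain ⟨n, hpn, hcardpn⟩ := FiniteField.card F p
    have h1 : p ∣ Fintype.card F := hcardpn ▸ dvd_pow_self p n.pos.ne'
    rw [hF, hqpow, ← pow_mul] at h1
    exact (Nat.prime_dvd_prime_iff_eq hpn Nat.prime_two).mp (hpn.dvd_of_dvd_pow h1)
  subst hp2
  haveI : CharP F 2 := hp
  -- Frobenius-type identities
  have frobq : ∀ x y : F, (x + y) ^ q = x ^ q + y ^ q := by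
    intro x y; rw [hqpow]; exact add_pow_char_pow ..
  have frobq₀ : ∀ x y : F, (x + y) ^ q₀ = x ^ q₀ + y ^ q₀ := by
    intro x y; rw [hq₀]; exact add_pow_char_pow ..
  have selfcancel : ∀ x : F, x + x = 0 := CharTwo.add_self_eq_zero
  have powcard : ∀ x : F, x ^ q ^ 2 = x := by
    intro x; rw [← hF]; exact FiniteField.pow_card x
  -- the additive map t x = x^q + x
  set t : F →+ F := AddMonoidHom.mk' (fun x => x ^ q + x)
    (by intro a b; show (a+b)^q + (a+b) = _; rw [frobq]; ring) with ht
  have htapp : ∀ x : F, t x = x ^ q + x := fun x => rfl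
  have htt : ∀ x : F, t (t x) = 0 := by
    intro x
    rw [htapp, htapp, frobq, ← pow_mul, ← sq, powcard]
    ring_nf
    simp [CharTwo.two_eq_zero]
  -- range t ≤ ker t
  have hrk : t.range ≤ t.ker := by
    rintro _ ⟨x, rfl⟩; exact htt x
  -- kernel has at most q elements: roots of X^q - X
  have hker_sub : (t.ker : Set F) ⊆ ((X ^ q - X : F[X]).roots.toFinset : Finset F) := by
    intro x hx
    simp only [Finset.coe_sort_coe, Multiset.mem_toFinset, Finset.mem_coe]
    rw [mem_roots (FiniteField.X_pow_card_sub_X_ne_zero F hq1)]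
    have hx' : x ^ q + x = 0 := hx
    simp only [IsRoot, eval_sub, eval_pow, eval_X, sub_eq_zero]
    have h2 := eq_neg_of_add_eq_zero_left hx'
    rwa [CharTwo.neg_eq] at h2
  have hker_le : Nat.card t.ker ≤ q := by
    have h1 : Nat.card t.ker = (t.ker : Set F).ncard := by
      rw [← Nat.card_coe_set_eq]; rfl
    rw [h1]
    calc (t.ker : Set F).ncard ≤ (((X ^ q - X : F[X]).roots.toFinset : Finset F) : Set F).ncard :=
          Set.ncard_le_ncard hker_sub (Set.toFinite _)
      _ = (X ^ q - X : F[X]).roots.toFinset.card := Set.ncard_coe_finset _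
      _ ≤ Multiset.card (X ^ q - X : F[X]).roots := Multiset.toFinset_card_le _
      _ ≤ (X ^ q - X : F[X]).natDegree := card_roots' _
      _ = q := FiniteField.X_pow_card_sub_X_natDegree_eq F hq1
  -- first isomorphism theorem counting
  have hcard_split : Nat.card F = Nat.card (F ⧸ t.ker) * Nat.card t.ker :=
    AddSubgroup.card_eq_card_quotient_mul_card_addSubgroup t.ker
  have hquot : Nat.card (F ⧸ t.ker) = Nat.card t.range :=
    Nat.card_congr (QuotientAddGroup.quotientKerEquivRange t).toEquiv
  have hrange_le : Nat.card t.range ≤ Nat.card t.ker :=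
    Nat.card_le_card_of_injective _ (Set.inclusion_injective hrk)
  have hcardF : Nat.card F = q ^ 2 := by rw [Nat.card_eq_fintype_card, hF]
  have hker_eq : Nat.card t.ker = q := by
    refine le_antisymm hker_le ?_
    by_contra hlt
    push_neg at hlt
    have : Nat.card F < q ^ 2 := by
      calc Nat.card F = Nat.card (F ⧸ t.ker) * Nat.card t.ker := hcard_split
        _ = Nat.card t.range * Nat.card t.ker := by rw [hquot]
        _ ≤ Nat.card t.ker * Nat.card t.ker := by
            exact Nat.mul_le_mul_right _ hrange_le
        _ < q * q := Nat.mul_lt_mul'' hlt hlt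
        _ = q ^ 2 := (sq q).symm
    omega
  -- describe the solution set as (ker t) ×ˢ (ker t)
  have hset : {p : F × F | p.2 ^ q + p.2 = p.1 ^ (q₀ + q) + p.1 ^ (q₀ + 1)}
      = (t.ker : Set F) ×ˢ (t.ker : Set F) := by
    ext ⟨α, β⟩
    simp only [Set.mem_setOf_eq, Set.mem_prod, SetLike.mem_coe, AddMonoidHom.mem_ker, htapp]
    have hrhs : α ^ (q₀ + q) + α ^ (q₀ + 1) = α ^ q₀ * (α ^ q + α) := by
      rw [pow_add, pow_add, pow_one]; ring
    constructor
    · intro h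
      have hql : (α ^ q) ^ q = α := by
        rw [← pow_mul, ← sq, powcard]
      have key : (α ^ q + α) ^ (q₀ + 1) = 0 := by
        have h2 : t (β ^ q + β) = 0 := htt β
        rw [htapp] at h2
        rw [h, hrhs] at h2
        have e1 : (α ^ q₀ * (α ^ q + α)) ^ q = (α ^ q) ^ q₀ * (α ^ q + α) := by
          have h1 : (α ^ q₀) ^ q = (α ^ q) ^ q₀ := by
            rw [← pow_mul, ← pow_mul, Nat.mul_comm]
          rw [mul_pow, frobq, hql, h1, add_comm α (α ^ q)]
        rw [e1] at h2
        have e2 : (α ^ q) ^ q₀ * (α ^ q + α) + α ^ q₀ * (α ^ q + α)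
            = (α ^ q + α) ^ (q₀ + 1) := by
          rw [pow_succ, frobq₀]; ring
        rw [e2] at h2
        exact h2
      have hα : α ^ q + α = 0 :=
        pow_eq_zero_iff (Nat.succ_ne_zero q₀) |>.mp key
      refine ⟨hα, ?_⟩
      rw [hrhs, hα, mul_zero] at h
      exact h
    · rintro ⟨hα, hβ⟩
      rw [hβ, hrhs, hα, mul_zero]
  -- conclude
  rw [hset]
  have : ((t.ker : Set F) ×ˢ (t.ker : Set F)).ncard
      = (t.ker : Set F).ncard * (t.ker : Set F).ncard := by
    rw [← Nat.card_coe_set_eq, ← Nat.card_coe_set_eq, ← Nat.card_prod]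
    exact Nat.card_congr (Equiv.Set.prod _ _)
  rw [this]
  have hk : (t.ker : Set F).ncard = q := by
    rw [← Nat.card_coe_set_eq]; exact hker_eq
  rw [hk, sq]
end

section
/- Let m ≥ 1 be an integer, q₀ = 2^m, q = 2q₀², and let F be a finite field with q³ elements. Then the number of pairs (α, β) ∈ F × F satisfying β^q + β = α^{q₀+q} + α^{q₀+1} equals q². -/
/-!
Write `T(x) = x + x^q + x^{q²}` for the trace of `𝔽_{q³}/𝔽_q`. Applying `T` to
`β^q + β = α^{q₀}u`, where `u = α^q + α`, kills the left side; expanding the right side with the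
additivity of `x ↦ x^q, x^{q₀}` gives `u^{q₀+1} + u^{qq₀+1} + u^{qq₀+q} = 0`, and `T(u) = 0` as
well. If `u ≠ 0`, then `z = u^{q-1}` satisfies `z^{q₀}(z + 1) = 1` and `z^{q+1} = z + 1`, which is
impossible because `q = 2q₀²`. Hence `α ∈ 𝔽_q`, the right side vanishes and `β ∈ 𝔽_q`: the
solutions are exactly `𝔽_q × 𝔽_q`, and `X^q - X` has exactly `q` roots in `𝔽_{q³}`.
-/

open Polynomial

theorem pow_sub_self_dvd_pow_pow_sub_self {R : Type*} [CommRing R] (a : R) (q k : ℕ) :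
    a ^ q - a ∣ a ^ q ^ k - a := by
  induction k with
  | zero => simp
  | succ k ih =>
    rw [show a ^ q ^ (k + 1) - a = ((a ^ q ^ k) ^ q - a ^ q) + (a ^ q - a) by ring]
    exact dvd_add (ih.trans (sub_dvd_pow_sub_pow _ _ _)) dvd_rfl

theorem FiniteField.ncard_setOf_pow_eq_self {F : Type*} [Field F] [Fintype F] {q k : ℕ}
    (hq : 1 < q) (hF : Fintype.card F = q ^ k) : {x : F | x ^ q = x}.ncard = q := by
  classical
  set P : F[X] := X ^ q - X
  have hP : P ≠ 0 := X_pow_card_sub_X_ne_zero F hq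
  have hB : (X ^ Fintype.card F - X : F[X]) ≠ 0 := X_pow_card_sub_X_ne_zero F Fintype.one_lt_card
  have hdvd : P ∣ X ^ Fintype.card F - X := hF ▸ pow_sub_self_dvd_pow_pow_sub_self X q k
  have hsplit : P.Splits := by
    refine Splits.of_dvd ?_ hB hdvd
    rw [splits_iff_card_roots, roots_X_pow_card_sub_X,
      X_pow_card_sub_X_natDegree_eq F Fintype.one_lt_card]
    rfl
  have hnodup : P.roots.Nodup :=
    Multiset.nodup_of_le ((roots.le_of_dvd hB hdvd).trans_eq (roots_X_pow_card_sub_X F))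
      Finset.univ.nodup
  have hset : {x : F | x ^ q = x} = ↑P.roots.toFinset := by
    ext x
    simp [P, mem_roots hP, sub_eq_zero]
  rw [hset, Set.ncard_coe_finset, Multiset.toFinset_card_of_nodup hnodup,
    ← hsplit.natDegree_eq_card_roots, X_pow_card_sub_X_natDegree_eq F hq]

theorem pow_pow_pow_eq_self {M : Type*} [Monoid M] {q : ℕ} {x : M} (hx : x ^ q ^ 3 = x) :
    ((x ^ q) ^ q) ^ q = x := by
  rw [← pow_mul, ← pow_mul, ← pow_three, hx]

def traceCubic {R : Type*} [Semiring R] (q : ℕ) (x : R) : R := x + x ^ q + (x ^ q) ^ q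

section CharTwo

variable {R : Type*} [CommRing R] [CharP R 2]

theorem traceCubic_pow_add_self {n q : ℕ} (hq : q = 2 ^ n) (x : R) :
    traceCubic q (x ^ q + x) = x ^ q ^ 3 + x := by
  have hadd : ∀ y z : R, (y + z) ^ q = y ^ q + z ^ q := fun y z => hq ▸ add_pow_char_pow ..
  rw [traceCubic, hadd, hadd, pow_three, pow_mul, pow_mul]
  linear_combination (x ^ q + (x ^ q) ^ q) * CharTwo.two_eq_zero (R := R)

theorem traceCubic_pow_mul_pow_add_self {k n q₀ q : ℕ} (hq₀ : q₀ = 2 ^ k) (hq : q = 2 ^ n)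
    {α : R} (hα : α ^ q ^ 3 = α) :
    traceCubic q (α ^ q₀ * (α ^ q + α)) =
      (α ^ q + α) ^ (q₀ + 1) + (α ^ q + α) ^ (q * q₀ + 1) + (α ^ q + α) ^ (q * q₀ + q) := by
  have hadd : ∀ y z : R, (y + z) ^ q = y ^ q + z ^ q := fun y z => hq ▸ add_pow_char_pow ..
  have hadd₀ : ∀ y z : R, (y + z) ^ q₀ = y ^ q₀ + z ^ q₀ := fun y z => hq₀ ▸ add_pow_char_pow ..
  set u := α ^ q + α
  have hu₁ : u ^ q = (α ^ q) ^ q + α ^ q := hadd _ _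
  have hu₂ : (u ^ q) ^ q = α + (α ^ q) ^ q := by rw [hu₁, hadd, pow_pow_pow_eq_self hα]
  have hv₀ : u ^ q₀ = (α ^ q) ^ q₀ + α ^ q₀ := hadd₀ _ _
  have hv₁ : u ^ (q * q₀) = ((α ^ q) ^ q) ^ q₀ + (α ^ q) ^ q₀ := by rw [pow_mul, hu₁, hadd₀]
  rw [traceCubic, mul_pow, mul_pow, pow_right_comm _ q₀, pow_right_comm _ q₀, hu₂,
    pow_succ, pow_succ, pow_add, hu₁, hv₀, hv₁]
  linear_combination
    -((α ^ q + α) * (α ^ q) ^ q₀ + α ^ q * ((α ^ q) ^ q) ^ q₀) * CharTwo.two_eq_zero (R := R)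

theorem suzuki_no_common_root {m q₀ q : ℕ} (hq₀ : q₀ = 2 ^ m) (hq : q = 2 * q₀ ^ 2) (z : R)
    (h₁ : z ^ q₀ * (z + 1) = 1) (h₂ : z ^ (q + 1) = z + 1) : False := by
  have h₃ : z ^ (q + q₀ + 1) = 1 := by
    rw [add_right_comm, pow_add, h₂, mul_comm, h₁]
  have h₄ : z ^ q * (z ^ (2 * q₀) + 1) = 1 := by
    have hfrob : (z + 1) ^ (2 * q₀) = z ^ (2 * q₀) + 1 := by
      rw [show 2 * q₀ = 2 ^ (m + 1) by rw [hq₀, pow_succ'], add_pow_char_pow, one_pow]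
    rw [← hfrob, show q = q₀ * (2 * q₀) by rw [hq]; ring, pow_mul, ← mul_pow, h₁, one_pow]
  -- `h₃` and `h₄` give `z^{2q₀} + 1 = z^{q₀+1}`, which with `h₁` is `z^{q₀}(z^{q₀} + 1) = 0`;
  -- multiplying by `z + 1` and using `h₁` once more cancels the factor `z^{q₀}`.
  have h₅ : z ^ q₀ = 1 := by
    linear_combination (z + 1) * (z ^ (q₀ + 1) * h₄ - (z ^ (2 * q₀) + 1) * h₃)
      + (z + 2 - z ^ q₀) * h₁ - z ^ q₀ * (z + 1) * CharTwo.two_eq_zero (R := R)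
  have hz : z = 0 := by linear_combination h₁ - (z + 1) * h₅
  have := CharP.nontrivial_of_char_ne_one (R := R) (v := 2) (by norm_num)
  rw [hz, zero_pow (by rw [hq₀]; positivity), zero_mul] at h₁
  exact zero_ne_one h₁

end CharTwo

section Field

variable {F : Type*} [Field F] [CharP F 2] {m q₀ q : ℕ}

theorem pow_eq_self_of_suzuki_eq (hq₀ : q₀ = 2 ^ m) (hq : q = 2 * q₀ ^ 2) {α β : F}
    (hα : α ^ q ^ 3 = α) (hβ : β ^ q ^ 3 = β) (h : β ^ q + β = α ^ q₀ * (α ^ q + α)) :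
    α ^ q = α := by
  have hq' : q = 2 ^ (2 * m + 1) := by rw [hq, hq₀]; ring
  rw [← CharTwo.add_eq_zero]
  by_contra hu
  have hTu : traceCubic q (α ^ q + α) = 0 := by
    rw [traceCubic_pow_add_self hq', hα, CharTwo.add_self_eq_zero]
  have hTαu : traceCubic q (α ^ q₀ * (α ^ q + α)) = 0 := by
    rw [← h, traceCubic_pow_add_self hq', hβ, CharTwo.add_self_eq_zero]
  rw [traceCubic_pow_mul_pow_add_self hq₀ hq' hα] at hTαu
  generalize α ^ q + α = u at hu hTu hTαu
  obtain ⟨z, hz⟩ : ∃ z, u ^ q = z * u :=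
    ⟨u ^ (q - 1), by rw [← pow_succ, Nat.sub_add_cancel (by rw [hq']; exact Nat.one_le_two_pow)]⟩
  refine suzuki_no_common_root hq₀ hq z ?_ ?_
  · refine mul_right_cancel₀ (pow_ne_zero (q₀ + 1) hu) ?_
    rw [pow_succ _ (q * q₀), pow_mul, ← mul_add_one q, pow_mul, hz, mul_pow] at hTαu
    linear_combination hTαu - u ^ (q₀ + 1) * CharTwo.two_eq_zero (R := F)
  · refine mul_right_cancel₀ hu ?_
    rw [traceCubic, hz, mul_pow, hz] at hTu
    linear_combination hTu - (z + 1) * u * CharTwo.two_eq_zero (R := F)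

theorem suzuki_eq_iff (hq₀ : q₀ = 2 ^ m) (hq : q = 2 * q₀ ^ 2) {α β : F}
    (hα : α ^ q ^ 3 = α) (hβ : β ^ q ^ 3 = β) :
    β ^ q + β = α ^ (q₀ + q) + α ^ (q₀ + 1) ↔ α ^ q = α ∧ β ^ q = β := by
  rw [pow_add, pow_add, pow_one, ← mul_add]
  refine ⟨fun h => ?_, fun ⟨hα', hβ'⟩ => ?_⟩
  · have hα' := pow_eq_self_of_suzuki_eq hq₀ hq hα hβ h
    rw [hα', CharTwo.add_self_eq_zero, mul_zero, CharTwo.add_eq_zero] at h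
    exact ⟨hα', h⟩
  · rw [hα', hβ', CharTwo.add_self_eq_zero, CharTwo.add_self_eq_zero, mul_zero]

end Field

theorem suzuki_affine_point_count_7_general
    (m q₀ q : ℕ) (hq₀ : q₀ = 2 ^ m) (hq : q = 2 * q₀ ^ 2)
    (F : Type*) [Field F] [Fintype F] (hF : Fintype.card F = q ^ 3) :
    Set.ncard {p : F × F | p.2 ^ q + p.2 = p.1 ^ (q₀ + q) + p.1 ^ (q₀ + 1)} = q ^ 2 := by
  have hq' : q = 2 ^ (2 * m + 1) := by rw [hq, hq₀]; ring
  have : CharP F 2 := charP_of_card_eq_prime_pow (f := 3 * (2 * m + 1)) (by rw [hF, hq', pow_mul'])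
  have hfix : ∀ x : F, x ^ q ^ 3 = x := fun x => hF ▸ FiniteField.pow_card x
  have hset : {p : F × F | p.2 ^ q + p.2 = p.1 ^ (q₀ + q) + p.1 ^ (q₀ + 1)} =
      {x : F | x ^ q = x} ×ˢ {x : F | x ^ q = x} := by
    ext ⟨α, β⟩
    exact suzuki_eq_iff hq₀ hq (hfix α) (hfix β)
  have hq1 : 1 < q := hq' ▸ Nat.one_lt_two_pow (by omega)
  rw [hset, Set.ncard_prod, FiniteField.ncard_setOf_pow_eq_self hq1 hF, sq]

theorem suzuki_affine_point_count_7
    (m q₀ q : ℕ) (hm : 1 ≤ m) (hq₀ : q₀ = 2 ^ m) (hq : q = 2 * q₀ ^ 2)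
    (F : Type*) [Field F] [Fintype F] (hF : Fintype.card F = q ^ 3) :
    Set.ncard {p : F × F | p.2 ^ q + p.2 = p.1 ^ (q₀ + q) + p.1 ^ (q₀ + 1)} = q ^ 2 :=
  suzuki_affine_point_count_7_general m q₀ q hq₀ hq F hF
end

section
/- Let m ≥ 1 be an integer, q₀ = 2^m, q = 2q₀², and let F be a finite field with q⁴ elements. Then the number of pairs (α, β) ∈ F × F satisfying β^q + β = α^{q₀+q} + α^{q₀+1} and α^q ≠ α equals q⁴ + 2q₀q²(q−1) − q². -/
/-!
Write `σ x = x ^ q` and `ρ x = x ^ q₀`, so that `σ x = ρ (ρ x) ^ 2` and the right-hand side of the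
equation is `ρ α * (σ α + α)`. The Artin–Schreier map `β ↦ σ β + β` is `q`-to-one onto the kernel
of the trace `Tr x = x + σ x + σ² x + σ³ x`, so the fibre over `α` has `q` points when
`Tr (ρ α * (σ α + α)) = 0` and none otherwise. This trace is a function `G` of `v = σ α + α` alone,
and `α ↦ v` is again `q`-to-one onto the trace kernel, so the count is `q²` times the number of
nonzero `v` with `Tr v = 0` and `G v = 0`. For these, `τ v = v + σ² v` lies in `𝔽_q`: the slice
`τ = 0` is `𝔽_qˣ`, scaling by `𝔽_qˣ` identifies every other slice with `τ = 1`, and `v ↦ v⁻¹ + 1`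
maps the slice `τ = 1` onto the `(q + 2q₀ + 1)`-th roots of unity other than `1`. Hence there are
`q² (q - 1) (q + 2q₀ + 1)` points.
-/

open Finset Polynomial

namespace Suzuki

section Endomorphisms

variable {F : Type*} [Field F] (σ ρ : F →+* F)

def relTrace (x : F) : F := x + σ x + σ (σ x) + σ (σ (σ x))

def partialTrace (v : F) : F := v + σ (σ v)

def suzukiForm (v : F) : F :=
  ρ v * v + ρ (σ v) * (v + σ v) + ρ (σ (σ v)) * (v + σ v + σ (σ v))

-- For `σ x = x ^ q` and `ρ x = x ^ q₀` this is `a ^ (q + 2 * q₀ + 1)`.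
def suzukiNorm (a : F) : F := σ a * ρ a ^ 2 * a

def artinSchreier : F →+ F := σ.toAddMonoidHom + AddMonoidHom.id F

variable {σ ρ}

@[simp]
theorem artinSchreier_apply (x : F) : artinSchreier σ x = σ x + x := rfl

theorem relTrace_eq_partialTrace_add (v : F) :
    relTrace σ v = partialTrace σ v + σ (partialTrace σ v) := by
  simp only [relTrace, partialTrace, map_add]
  ring

theorem partialTrace_mul {t : F} (ht : σ t = t) (v : F) :
    partialTrace σ (t * v) = t * partialTrace σ v := by
  simp only [partialTrace, map_mul, ht]
  ring

theorem suzukiForm_mul {t : F} (ht : σ t = t) (v : F) :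
    suzukiForm σ ρ (t * v) = ρ t * t * suzukiForm σ ρ v := by
  simp only [suzukiForm, map_mul, ht]
  ring

theorem suzukiNorm_mul (a b : F) :
    suzukiNorm σ ρ (a * b) = suzukiNorm σ ρ a * suzukiNorm σ ρ b := by
  simp only [suzukiNorm, map_mul]
  ring

theorem suzukiNorm_inv (a : F) : suzukiNorm σ ρ a⁻¹ = (suzukiNorm σ ρ a)⁻¹ := by
  simp only [suzukiNorm, map_inv₀, mul_inv, inv_pow]

theorem map_comm_of_eq_sq (hσ : ∀ x, σ x = ρ (ρ x) ^ 2) (x : F) : ρ (σ x) = σ (ρ x) := by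
  rw [hσ, hσ, map_pow]

theorem map_map_of_suzukiNorm_eq_one (hσ : ∀ x, σ x = ρ (ρ x) ^ 2) {a : F}
    (ha : suzukiNorm σ ρ a = 1) : ρ (σ a) = ρ a * a ∧ σ (σ a) * a = 1 := by
  rw [suzukiNorm] at ha
  have ha0 : a ≠ 0 := by rintro rfl; simp at ha
  have hρa0 : ρ a ≠ 0 := (map_ne_zero ρ).mpr ha0
  have hσa : σ a = (ρ a ^ 2 * a)⁻¹ := eq_inv_of_mul_eq_one_left (by rw [← mul_assoc, ha])
  have hρσa : ρ (σ a) = ρ a * a := by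
    rw [hσa, map_inv₀, map_mul, map_pow, ← hσ, hσa]
    field_simp
  refine ⟨hρσa, ?_⟩
  have hσ1 := congrArg σ ha
  rw [map_mul, map_mul, map_pow, ← map_comm_of_eq_sq hσ, hρσa, map_one] at hσ1
  linear_combination hσ1 - σ (σ a) * a * ha

variable [CharP F 2]

-- Both orientations, since `field_simp` produces both.
theorem add_one_ne_zero_of_ne_one {x : F} (hx : x ≠ 1) : x + 1 ≠ 0 ∧ 1 + x ≠ 0 :=
  ⟨fun h => hx (CharTwo.add_eq_zero.mp h), fun h => hx (CharTwo.add_eq_zero.mp h).symm⟩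

theorem artinSchreier_eq_zero_iff (x : F) : artinSchreier σ x = 0 ↔ σ x = x :=
  CharTwo.add_eq_zero

theorem relTrace_eq_zero_iff (v : F) :
    relTrace σ v = 0 ↔ σ (partialTrace σ v) = partialTrace σ v := by
  rw [relTrace_eq_partialTrace_add, CharTwo.add_eq_zero, eq_comm]

theorem relTrace_artinSchreier (h4 : ∀ x, σ (σ (σ (σ x))) = x) (x : F) :
    relTrace σ (artinSchreier σ x) = 0 := by
  simp only [relTrace, artinSchreier_apply, map_add, h4]
  ring_nf
  reduce_mod_char!

theorem relTrace_mul_artinSchreier (hσρ : ∀ x, ρ (σ x) = σ (ρ x))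
    (h4 : ∀ x, σ (σ (σ (σ x))) = x) (α : F) :
    relTrace σ (ρ α * artinSchreier σ α) = suzukiForm σ ρ (artinSchreier σ α) := by
  simp only [relTrace, suzukiForm, artinSchreier_apply, map_add, map_mul, hσρ, h4]
  ring_nf
  reduce_mod_char!

theorem suzukiForm_of_map_map_eq {v : F} (hv : σ (σ v) = v) :
    suzukiForm σ ρ v = ρ (σ v + v) * (σ v + v) := by
  simp only [suzukiForm, hv, map_add]
  ring_nf
  reduce_mod_char!

theorem partialTrace_eq_zero_and_suzukiForm_eq_zero_iff (v : F) :
    partialTrace σ v = 0 ∧ suzukiForm σ ρ v = 0 ↔ σ v = v := by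
  constructor
  · rintro ⟨hτ, hG⟩
    have hv : σ (σ v) = v := (CharTwo.add_eq_zero.mp hτ).symm
    rw [suzukiForm_of_map_map_eq hv, mul_eq_zero, map_eq_zero, or_self] at hG
    exact CharTwo.add_eq_zero.mp hG
  · intro hv
    have hv2 : σ (σ v) = v := by rw [hv, hv]
    rw [partialTrace, suzukiForm_of_map_map_eq hv2, hv2, hv, CharTwo.add_self_eq_zero]
    simp

theorem suzukiNorm_add_one (hσ : ∀ x, σ x = ρ (ρ x) ^ 2) {v : F}
    (hτ : partialTrace σ v = 1) (hG : suzukiForm σ ρ v = 0) :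
    suzukiNorm σ ρ (v + 1) = suzukiNorm σ ρ v := by
  -- With `s = v + σ v`, the equation `G v = 0` reads `ρ v = v + g` for a polynomial `g` in `s`
  -- and `ρ s`; applying `ρ` and squaring turns `σ v = s + v` into a relation of degree two in `v`.
  obtain ⟨s, hs⟩ : ∃ s, v + σ v = s := ⟨_, rfl⟩
  obtain ⟨g, hg⟩ : ∃ g, ρ s * s + s + 1 = g := ⟨_, rfl⟩
  have hσv : σ v = s + v := by linear_combination (norm := (ring_nf; reduce_mod_char!)) -hs
  have hσσv : σ (σ v) = v + 1 := by
    rw [partialTrace] at hτ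
    linear_combination (norm := (ring_nf; reduce_mod_char!)) hτ
  have hσs : σ s = s + 1 := by
    rw [← hs, map_add, hσσv]
    ring
  have hρv : ρ v = v + g := by
    rw [suzukiForm, hσσv, hσv, map_add, map_add, map_one] at hG
    linear_combination (norm := (ring_nf; reduce_mod_char!)) hG + hg
  have hρg : ρ g ^ 2 = s * ρ s ^ 2 + 1 := by
    have : ρ (ρ s) ^ 2 = s + 1 := by rw [← hσ, hσs]
    simp only [← hg, map_add, map_mul, map_one, CharTwo.add_sq, mul_pow, this, one_pow]
    ring_nf
    reduce_mod_char!
  have hσv₂ : s + v = v ^ 2 + g ^ 2 + ρ g ^ 2 := by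
    rw [← hσv, hσ, hρv, map_add, hρv, CharTwo.add_sq, CharTwo.add_sq]
  rw [suzukiNorm, suzukiNorm, map_add, map_add, map_one, map_one, hσv, hρv]
  linear_combination (norm := (ring_nf; reduce_mod_char!))
    s * hσv₂ + s * hρg + (g + ρ s * s + s + 1) * hg

theorem suzukiNorm_inv_add_one (hσ : ∀ x, σ x = ρ (ρ x) ^ 2) {v : F}
    (hτ : partialTrace σ v = 1) (hG : suzukiForm σ ρ v = 0) :
    v ≠ 0 ∧ suzukiNorm σ ρ (v⁻¹ + 1) = 1 := by
  have hv : v ≠ 0 := by rintro rfl; simp [partialTrace] at hτ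
  have hNv : suzukiNorm σ ρ v ≠ 0 := by simp [suzukiNorm, hv]
  refine ⟨hv, ?_⟩
  rw [show v⁻¹ + 1 = (v + 1) * v⁻¹ by rw [add_mul, mul_inv_cancel₀ hv, one_mul, add_comm],
    suzukiNorm_mul, suzukiNorm_inv,
    suzukiNorm_add_one hσ hτ hG, mul_inv_cancel₀ hNv]

theorem suzukiForm_inv_add_one (hσ : ∀ x, σ x = ρ (ρ x) ^ 2) {a : F}
    (ha : suzukiNorm σ ρ a = 1) (ha1 : a ≠ 1) :
    partialTrace σ (a + 1)⁻¹ = 1 ∧ suzukiForm σ ρ (a + 1)⁻¹ = 0 := by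
  obtain ⟨hρσa, hσσa⟩ := map_map_of_suzukiNorm_eq_one hσ ha
  rw [suzukiNorm] at ha
  have ha0 : a ≠ 0 := by rintro rfl; simp at ha
  have hρa0 : ρ a ≠ 0 := (map_ne_zero ρ).mpr ha0
  have hσa1 : σ a ≠ 1 := fun h => ha1 (σ.injective (h.trans σ.map_one.symm))
  have hρa1 : ρ a ≠ 1 := fun h => ha1 (ρ.injective (h.trans ρ.map_one.symm))
  have hρaa1 : ρ a * a ≠ 1 := fun h => hσa1 (ρ.injective (by rw [hρσa, h, map_one]))
  have hρa2a1 : ρ a ^ 2 * a ≠ 1 := fun h => hσa1 (by linear_combination ha - σ a * h)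
  obtain ⟨h₁, h₁'⟩ := add_one_ne_zero_of_ne_one ha1
  obtain ⟨h₂, h₂'⟩ := add_one_ne_zero_of_ne_one hρa1
  obtain ⟨h₃, h₃'⟩ := add_one_ne_zero_of_ne_one hρaa1
  obtain ⟨h₄, h₄'⟩ := add_one_ne_zero_of_ne_one hρa2a1
  have hσσa' : σ (σ a) = a⁻¹ := eq_inv_of_mul_eq_one_left hσσa
  have hσa : σ a = (ρ a ^ 2 * a)⁻¹ := eq_inv_of_mul_eq_one_left (by rw [← mul_assoc, ha])
  constructor
  · simp only [partialTrace, map_inv₀, map_add, map_one, hσσa']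
    field_simp
    ring
  · simp only [suzukiForm, map_inv₀, map_add, map_one, hσσa', hρσa]
    rw [hσa]
    field_simp
    ring_nf
    reduce_mod_char!

end Endomorphisms

theorem add_two_mul_add_one_dvd {q₀ q : ℕ} (hq : q = 2 * q₀ ^ 2) :
    q + 2 * q₀ + 1 ∣ q ^ 4 - 1 := by
  have h : ((q + 2 * q₀ + 1 : ℕ) : ℤ) ∣ ((q ^ 2 + 1 : ℕ) : ℤ) :=
    ⟨q - 2 * q₀ + 1, by subst hq; push_cast; ring⟩
  refine (Int.natCast_dvd_natCast.mp h).trans ⟨q ^ 2 - 1, ?_⟩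
  rw [← Nat.sq_sub_sq, one_pow, ← pow_mul]

section Counting

theorem card_filter_comp_addMonoidHom {G H : Type*} [AddGroup G] [Fintype G] [AddMonoid H]
    [DecidableEq H] (φ : G →+ H) (P : H → Prop) [DecidablePred P] :
    #{x | P (φ x)} = #{x | φ x = 0} * #{y ∈ univ.image φ | P y} := by
  rw [card_eq_sum_card_fiberwise (f := φ) (t := {y ∈ univ.image φ | P y})
    (fun x hx => by simp_all), sum_const_nat, mul_comm]
  intro y hy
  simp only [mem_filter, mem_image, mem_univ, true_and] at hy
  obtain ⟨⟨x, rfl⟩, hPy⟩ := hy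
  rw [filter_filter, ← AddMonoidHom.card_fiber_eq_of_mem_range φ ⟨x, rfl⟩ ⟨0, map_zero φ⟩]
  congr 1
  ext a
  simp only [mem_filter, mem_univ, true_and, and_iff_right_iff_imp]
  rintro h
  rwa [h]

variable {F : Type*} [Field F] [Fintype F] {q : ℕ} {σ ρ : F →+* F}

theorem map_iterate_four (hσ : ∀ x, σ x = x ^ q) (hF : Fintype.card F = q ^ 4) (x : F) :
    σ (σ (σ (σ x))) = x := by
  simp only [hσ, ← pow_mul]
  rw [show q * q * q * q = Fintype.card F by rw [hF]; ring]
  exact FiniteField.pow_card x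

variable [DecidableEq F]

theorem card_filter_isRoot_le {p : F[X]} (hp : p ≠ 0) : #{x | p.IsRoot x} ≤ p.natDegree :=
  card_le_degree_of_subset_roots fun x hx => by simpa [mem_roots hp] using hx

theorem card_pow_eq_one_of_dvd {r : ℕ} (hr : r ∣ Fintype.card F - 1) :
    #{x : F | x ^ r = 1} = r := by
  have hcard : 0 < Fintype.card F - 1 := Nat.sub_pos_of_lt Fintype.one_lt_card
  have hr0 : 0 < r := Nat.pos_of_dvd_of_pos hr hcard
  obtain ⟨g, hg⟩ := IsCyclic.exists_ofOrder_eq_natCard (α := Fˣ)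
  rw [Nat.card_eq_fintype_card, Fintype.card_units] at hg
  have hζ : IsPrimitiveRoot (((g ^ ((Fintype.card F - 1) / r) : Fˣ)) : F) r := by
    rw [IsPrimitiveRoot.coe_units_iff, IsPrimitiveRoot.iff_orderOf,
      orderOf_pow_of_dvd (Nat.div_pos (Nat.le_of_dvd hcard hr) hr0).ne'
        (by rw [hg]; exact Nat.div_dvd_of_dvd hr),
      hg, Nat.div_div_self hr hcard.ne']
  calc #{x : F | x ^ r = 1} = #(nthRootsFinset r (1 : F)) := by
        congr 1
        ext x
        simp [mem_nthRootsFinset hr0]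
    _ = r := hζ.card_nthRootsFinset

theorem card_fixed_le (hσ : ∀ x, σ x = x ^ q) (hq : 1 < q) : #{x | σ x = x} ≤ q :=
  calc #{x | σ x = x} = #{x | (X ^ q - X : F[X]).IsRoot x} := by simp [hσ, sub_eq_zero]
    _ ≤ _ := card_filter_isRoot_le (FiniteField.X_pow_card_sub_X_ne_zero F hq)
    _ = q := FiniteField.X_pow_card_sub_X_natDegree_eq F hq

theorem card_relTrace_eq_zero_le (hσ : ∀ x, σ x = x ^ q) (hq : 1 < q) :
    #{x | relTrace σ x = 0} ≤ q ^ 3 := by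
  set p : F[X] := X ^ q ^ 3 + (X ^ q ^ 2 + X ^ q + X)
  have hlt : (X ^ q ^ 2 + X ^ q + X : F[X]).degree < (X ^ q ^ 3 : F[X]).degree := by
    apply degree_lt_degree
    rw [natDegree_X_pow]
    refine lt_of_le_of_lt ?_ (Nat.pow_lt_pow_right hq (by norm_num : 2 < 3))
    compute_degree
    exact max_le le_rfl (max_le (Nat.le_self_pow two_ne_zero q) (Nat.one_le_pow _ _ (by omega)))
  have hp : p.Monic := (monic_X_pow _).add_of_left hlt
  have hdeg : p.natDegree = q ^ 3 := by
    rw [natDegree_add_eq_left_of_degree_lt hlt, natDegree_X_pow]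
  have heval : ∀ x, relTrace σ x = p.eval x := by
    intro x
    simp only [relTrace, hσ, p, eval_add, eval_pow, eval_X, ← pow_mul]
    ring
  calc #{x | relTrace σ x = 0} = #{x | p.IsRoot x} := by
        congr 1
        ext x
        simp [heval]
    _ ≤ q ^ 3 := hdeg ▸ card_filter_isRoot_le hp.ne_zero

theorem card_partialTrace_ne_zero :
    #{v | partialTrace σ v ≠ 0 ∧ σ (partialTrace σ v) = partialTrace σ v ∧ suzukiForm σ ρ v = 0}
      = #{t | t ≠ 0 ∧ σ t = t} * #{v | partialTrace σ v = 1 ∧ suzukiForm σ ρ v = 0} := by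
  rw [← card_product]
  symm
  refine card_bij' (fun p _ => p.1 * p.2)
    (fun v _ => (partialTrace σ v, (partialTrace σ v)⁻¹ * v)) ?_ ?_ ?_ ?_
  · rintro ⟨t, w⟩ h
    simp only [mem_product, mem_filter, mem_univ, true_and] at h ⊢
    obtain ⟨⟨ht0, ht⟩, hτ, hG⟩ := h
    simp [partialTrace_mul ht, suzukiForm_mul ht, hτ, hG, ht0, ht]
  · intro v h
    simp only [mem_product, mem_filter, mem_univ, true_and] at h ⊢
    obtain ⟨hτ0, hτ, hG⟩ := h
    have hτinv : σ (partialTrace σ v)⁻¹ = (partialTrace σ v)⁻¹ := by rw [map_inv₀, hτ]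
    simp [partialTrace_mul hτinv, suzukiForm_mul hτinv, hτ0, hτ, hG]
  · rintro ⟨t, w⟩ h
    simp only [mem_product, mem_filter, mem_univ, true_and] at h
    obtain ⟨⟨ht0, ht⟩, hτ, -⟩ := h
    simp [partialTrace_mul ht, hτ, ht0]
  · intro v h
    simp only [mem_filter, mem_univ, true_and] at h
    simp [h.1]

variable [CharP F 2]

theorem card_fixed_and_range_artinSchreier (hσ : ∀ x, σ x = x ^ q) (hq : 1 < q)
    (hF : Fintype.card F = q ^ 4) :
    #{x | σ x = x} = q ∧
      univ.image (artinSchreier σ) = ({x | relTrace σ x = 0} : Finset F) := by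
  -- The kernel has at most `q` elements and the image lies in the trace kernel, which has at most
  -- `q ^ 3`; since the two sizes multiply to `q ^ 4`, both bounds are attained.
  have hsub : univ.image (artinSchreier σ) ⊆ ({x | relTrace σ x = 0} : Finset F) := by
    intro y hy
    obtain ⟨x, -, rfl⟩ := mem_image.mp hy
    simpa using relTrace_artinSchreier (map_iterate_four hσ hF) x
  have hprod : #{x | σ x = x} * #(univ.image (artinSchreier σ)) = q ^ 4 := by
    have := card_filter_comp_addMonoidHom (artinSchreier σ) (fun _ => True)
    simp_rw [artinSchreier_eq_zero_iff] at this
    simpa [hF] using this.symm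
  have hK := card_fixed_le hσ hq
  have hI := (card_le_card hsub).trans (card_relTrace_eq_zero_le hσ hq)
  have hKq : #{x | σ x = x} = q := by
    nlinarith [Nat.mul_le_mul hK hI, pow_pos (by omega : 0 < q) 3]
  refine ⟨hKq, eq_of_subset_of_card_le hsub ?_⟩
  rw [hKq] at hprod
  refine (card_relTrace_eq_zero_le hσ hq).trans (le_of_eq ?_)
  exact Nat.eq_of_mul_eq_mul_left (by omega : 0 < q) (by rw [hprod]; ring)

theorem card_partialTrace_eq_one_add_one (hσ : ∀ x, σ x = ρ (ρ x) ^ 2) :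
    #{v | partialTrace σ v = 1 ∧ suzukiForm σ ρ v = 0} + 1 = #{a | suzukiNorm σ ρ a = 1} := by
  -- The root of unity `1` is the one left out by `v ↦ v⁻¹ + 1`.
  rw [← card_erase_add_one (s := {a | suzukiNorm σ ρ a = 1}) (a := 1)
    (by rw [mem_filter]; simp [suzukiNorm])]
  congr 1
  refine card_bij' (fun v _ => v⁻¹ + 1) (fun a _ => (a + 1)⁻¹) ?_ ?_ ?_ ?_
  · intro v hv
    simp only [mem_filter, mem_univ, true_and] at hv
    obtain ⟨hv0, hN⟩ := suzukiNorm_inv_add_one hσ hv.1 hv.2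
    simp [hN, hv0]
  · intro a ha
    simp only [mem_erase, mem_filter, mem_univ, true_and] at ha
    simpa using suzukiForm_inv_add_one hσ ha.2 ha.1
  · intro v _
    simp [CharTwo.add_cancel_right]
  · intro a _
    simp [CharTwo.add_cancel_right]

theorem card_suzukiForm_eq_zero (hσq : ∀ x, σ x = x ^ q) (hσ : ∀ x, σ x = ρ (ρ x) ^ 2)
    (hq : 1 < q) (hF : Fintype.card F = q ^ 4) :
    #{v | σ (partialTrace σ v) = partialTrace σ v ∧ v ≠ 0 ∧ suzukiForm σ ρ v = 0}
      = (q - 1) * #{a | suzukiNorm σ ρ a = 1} := by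
  have hK : #{t | t ≠ 0 ∧ σ t = t} = q - 1 := by
    rw [← (card_fixed_and_range_artinSchreier hσq hq hF).1,
      ← card_erase_of_mem (s := {t | σ t = t}) (a := 0) (by rw [mem_filter]; simp)]
    congr 1
    ext t
    simp
  rw [← card_partialTrace_eq_one_add_one hσ, mul_add, mul_one, ← hK,
    ← card_partialTrace_ne_zero,
    ← card_filter_add_card_filter_not (p := fun v => partialTrace σ v ≠ 0), filter_filter,
    filter_filter]
  congr 2
  · ext v
    simp only [mem_filter, mem_univ, true_and]
    constructor
    · rintro ⟨⟨hτ, -, hG⟩, hτ0⟩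
      exact ⟨hτ0, hτ, hG⟩
    · rintro ⟨hτ0, hτ, hG⟩
      refine ⟨⟨hτ, ?_, hG⟩, hτ0⟩
      rintro rfl
      simp [partialTrace] at hτ0
  · ext v
    simp only [mem_filter, mem_univ, true_and, not_not]
    rw [← partialTrace_eq_zero_and_suzukiForm_eq_zero_iff (ρ := ρ) v]
    constructor
    · rintro ⟨⟨-, hv0, hG⟩, hτ⟩
      exact ⟨hv0, hτ, hG⟩
    · rintro ⟨hv0, hτ, hG⟩
      simp [hτ, hv0, hG]

theorem card_artinSchreier_eq (hσq : ∀ x, σ x = x ^ q) (hq : 1 < q)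
    (hF : Fintype.card F = q ^ 4) (c : F) :
    #{β | σ β + β = c} = if relTrace σ c = 0 then q else 0 := by
  obtain ⟨hK, hrange⟩ := card_fixed_and_range_artinSchreier hσq hq hF
  rw [show #{β | σ β + β = c} = #{β | artinSchreier σ β = c} from rfl,
    card_filter_comp_addMonoidHom (artinSchreier σ) (· = c)]
  simp_rw [artinSchreier_eq_zero_iff, hK, hrange, filter_eq', mem_filter]
  simp [apply_ite card]

theorem card_suzuki_points (hσq : ∀ x, σ x = x ^ q) (hσ : ∀ x, σ x = ρ (ρ x) ^ 2)
    (hq : 1 < q) (hF : Fintype.card F = q ^ 4) :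
    #{p : F × F | σ p.2 + p.2 = ρ p.1 * (σ p.1 + p.1) ∧ σ p.1 ≠ p.1}
      = q * q * ((q - 1) * #{a | suzukiNorm σ ρ a = 1}) := by
  have h4 := map_iterate_four hσq hF
  have hσρ := map_comm_of_eq_sq hσ
  obtain ⟨-, hrange⟩ := card_fixed_and_range_artinSchreier hσq hq hF
  calc #{p : F × F | σ p.2 + p.2 = ρ p.1 * (σ p.1 + p.1) ∧ σ p.1 ≠ p.1}
      = ∑ α, if artinSchreier σ α ≠ 0 ∧ relTrace σ (ρ α * artinSchreier σ α) = 0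
          then q else 0 := by
        rw [card_filter, Fintype.sum_prod_type]
        refine sum_congr rfl fun α _ => ?_
        rw [← card_filter]
        by_cases hα : σ α = α
        · simp [hα, CharTwo.add_self_eq_zero]
        · simp only [artinSchreier_apply, ne_eq, CharTwo.add_eq_zero, hα, not_false_eq_true,
            and_true, true_and]
          exact card_artinSchreier_eq hσq hq hF _
    _ = q * #{α | artinSchreier σ α ≠ 0 ∧ suzukiForm σ ρ (artinSchreier σ α) = 0} := by
        simp_rw [relTrace_mul_artinSchreier hσρ h4]
        rw [sum_ite, sum_const_zero, sum_const, smul_eq_mul, add_zero, mul_comm]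
    _ = q * (q * #{v ∈ univ.image (artinSchreier σ) | v ≠ 0 ∧ suzukiForm σ ρ v = 0}) := by
        rw [card_filter_comp_addMonoidHom (artinSchreier σ)
          (fun v => v ≠ 0 ∧ suzukiForm σ ρ v = 0)]
        simp_rw [artinSchreier_eq_zero_iff, (card_fixed_and_range_artinSchreier hσq hq hF).1]
    _ = q * q * ((q - 1) * #{a | suzukiNorm σ ρ a = 1}) := by
        rw [hrange, filter_filter, ← card_suzukiForm_eq_zero hσq hσ hq hF, mul_assoc]
        simp_rw [relTrace_eq_zero_iff]

theorem card_suzuki_points_pow {m q₀ : ℕ} (hq₀ : q₀ = 2 ^ m)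
    (hq : q = 2 * q₀ ^ 2) (hF : Fintype.card F = q ^ 4) :
    #{p : F × F | p.2 ^ q + p.2 = p.1 ^ (q₀ + q) + p.1 ^ (q₀ + 1) ∧ p.1 ^ q ≠ p.1}
      = q * q * ((q - 1) * (q + 2 * q₀ + 1)) := by
  have hq₂ : q = 2 ^ (2 * m + 1) := by rw [hq, hq₀]; ring
  set ρ := iterateFrobenius F 2 m
  set σ := iterateFrobenius F 2 (2 * m + 1)
  have hρ : ∀ x, ρ x = x ^ q₀ := fun x => by rw [iterateFrobenius_def, hq₀]
  have hσq : ∀ x, σ x = x ^ q := fun x => by rw [iterateFrobenius_def, hq₂]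
  have hσ : ∀ x, σ x = ρ (ρ x) ^ 2 := fun x => by
    rw [hσq, hρ, hρ, ← pow_mul, ← pow_mul, hq]
    ring_nf
  have hf : ∀ α : F, α ^ (q₀ + q) + α ^ (q₀ + 1) = ρ α * (σ α + α) := fun α => by
    rw [hρ, hσq]
    ring
  have hN : ∀ a, suzukiNorm σ ρ a = a ^ (q + 2 * q₀ + 1) := fun a => by
    rw [suzukiNorm, hσq, hρ]
    ring
  have hμ : #{a | suzukiNorm σ ρ a = 1} = q + 2 * q₀ + 1 := by
    simp_rw [hN]
    exact card_pow_eq_one_of_dvd (hF ▸ add_two_mul_add_one_dvd hq)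
  have hq1 : 1 < q := by rw [hq₂]; exact Nat.one_lt_two_pow (by omega)
  simp_rw [hf, ← hσq]
  rw [card_suzuki_points hσq hσ hq1 hF, hμ]

end Counting

end Suzuki

theorem suzuki_code_length_general
    (m q₀ q : ℕ) (hq₀ : q₀ = 2 ^ m) (hq : q = 2 * q₀ ^ 2)
    (F : Type*) [Field F] [Fintype F] (hF : Fintype.card F = q ^ 4) :
    Set.ncard {p : F × F | p.2 ^ q + p.2 = p.1 ^ (q₀ + q) + p.1 ^ (q₀ + 1) ∧ p.1 ^ q ≠ p.1}
      = q ^ 4 + 2 * q₀ * q ^ 2 * (q - 1) - q ^ 2 := by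
  classical
  have : Fact (Nat.Prime 2) := ⟨Nat.prime_two⟩
  have : CharP F 2 := charP_of_card_eq_prime_pow (f := (2 * m + 1) * 4)
    (by rw [hF, hq, hq₀, pow_mul]; ring)
  rw [Set.ncard_eq_toFinset_card', Set.toFinset_ofPred, Suzuki.card_suzuki_points_pow hq₀ hq hF]
  rcases q with _ | k
  · simp
  · rw [Nat.add_sub_cancel]
    exact Nat.eq_sub_of_add_eq (by ring)

theorem suzuki_code_length
    (m q₀ q : ℕ) (hm : 1 ≤ m) (hq₀ : q₀ = 2 ^ m) (hq : q = 2 * q₀ ^ 2)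
    (F : Type*) [Field F] [Fintype F] (hF : Fintype.card F = q ^ 4) :
    Set.ncard {p : F × F | p.2 ^ q + p.2 = p.1 ^ (q₀ + q) + p.1 ^ (q₀ + 1) ∧ p.1 ^ q ≠ p.1}
      = q ^ 4 + 2 * q₀ * q ^ 2 * (q - 1) - q ^ 2 :=
  suzuki_code_length_general m q₀ q hq₀ hq F hF
end

section
/- Let m ≥ 1 be an integer, q₀ = 2^m, q = 2q₀², and let F be a finite field with q⁴ elements. Let α ∈ F and set c = α^{q₀+q} + α^{q₀+1}. If the polynomial Y^q + Y + c ∈ F[Y] has no root in F, then every monic irreducible factor of Y^q + Y + c in F[Y] has degree 2 (so Y^q + Y + c factors into q/2 irreducible quadratic factors). -/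
/-!
In characteristic `p`, with `q` a power of `p`, a root `β` of `Y ^ q - Y - c` satisfies
`β ^ q = β + c`; iterating, `β ^ (q ^ n) = β + s` with `s = c + c ^ q + ⋯ + c ^ (q ^ (n - 1))`.
When `|F| = q ^ n` the element `s` lies in `F`, so iterating `x ↦ x ^ |F|` another `p` times
gives `β ^ (|F| ^ p) = β + p s = β`. Hence every irreducible factor divides `X ^ (|F| ^ p) - X`
and has degree dividing `p`; for `p = 2`, degree `1` is excluded by the absence of roots.
-/

open Polynomial Finset

theorem pow_pow_pow_eq_add_sum_of_pow_pow_eq_add {R : Type*} [CommSemiring R] {p : ℕ}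
    [ExpChar R p] {k : ℕ} {β c : R} (h : β ^ p ^ k = β + c) (n : ℕ) :
    β ^ (p ^ k) ^ n = β + ∑ i ∈ range n, c ^ (p ^ k) ^ i := by
  induction n with
  | zero => simp
  | succ n ih =>
    rw [pow_succ, pow_mul, ih, add_pow_expChar_pow, h, sum_pow_char_pow, sum_range_succ',
      pow_zero, pow_one, add_assoc, add_comm c]
    simp only [pow_succ (p ^ k), pow_mul]

theorem pow_card_pow_char_eq_self_of_pow_eq_add_algebraMap {F A : Type*} [Field F] [Fintype F]
    [CommRing A] [Algebra F A] {p : ℕ} [Fact p.Prime] [CharP A p] {k n : ℕ}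
    (hF : Fintype.card F = (p ^ k) ^ n) {β : A} {c : F} (h : β ^ p ^ k = β + algebraMap F A c) :
    β ^ Fintype.card F ^ p = β := by
  have hβ : β ^ p ^ (k * n) = β + algebraMap F A (∑ i ∈ range n, c ^ (p ^ k) ^ i) := by
    rw [pow_mul, pow_pow_pow_eq_add_sum_of_pow_pow_eq_add h, map_sum]
    simp only [map_pow]
  have hQ : Fintype.card F = p ^ (k * n) := by rw [hF, pow_mul]
  rw [hQ, pow_pow_pow_eq_add_sum_of_pow_pow_eq_add hβ, ← hQ]
  simp only [← map_pow, FiniteField.pow_card_pow, sum_const, card_range, nsmul_eq_mul,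
    CharP.cast_eq_zero, zero_mul, add_zero]

theorem Irreducible.natDegree_dvd_char_of_dvd_X_pow_sub_X_sub_C {F : Type*} [Field F]
    [Fintype F] {p : ℕ} [Fact p.Prime] [CharP F p] {k n : ℕ} (hF : Fintype.card F = (p ^ k) ^ n)
    {c : F} {g : F[X]} (hg : Irreducible g) (hdvd : g ∣ X ^ p ^ k - X - C c) :
    g.natDegree ∣ p := by
  have := Fact.mk hg
  have : CharP (AdjoinRoot g) p := charP_of_injective_algebraMap' F p
  have hroot : AdjoinRoot.root g ^ p ^ k = AdjoinRoot.root g + AdjoinRoot.of g c := by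
    have := AdjoinRoot.mk_eq_zero.mpr hdvd
    simp only [map_sub, map_pow, AdjoinRoot.mk_X, AdjoinRoot.mk_C] at this
    rw [← sub_eq_zero, ← sub_sub, this]
  apply hg.natDegree_dvd_of_dvd_X_pow_card_pow_sub_X
  rw [Nat.card_eq_fintype_card, ← AdjoinRoot.mk_eq_zero, map_sub, map_pow, AdjoinRoot.mk_X,
    pow_card_pow_char_eq_self_of_pow_eq_add_algebraMap hF hroot, sub_self]

theorem suzuki_nonsplit_fiber_factors_into_quadratics_general
    (m q₀ q : ℕ) (hq₀ : q₀ = 2 ^ m) (hq : q = 2 * q₀ ^ 2)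
    (F : Type*) [Field F] [Fintype F] (hF : Fintype.card F = q ^ 4)
    (c : F)
    (hroot : ¬ ∃ y : F, y ^ q + y + c = 0) :
    ∀ p : Polynomial F, p.Monic → Irreducible p →
      p ∣ (Polynomial.X ^ q + Polynomial.X + Polynomial.C c) → p.natDegree = 2 := by
  intro g _ hg hdvd
  have hq2 : q = 2 ^ (2 * m + 1) := by rw [hq, hq₀]; ring
  have := Fact.mk Nat.prime_two
  have : CharP F 2 := charP_of_card_eq_prime_pow (hF.trans (by rw [hq2, ← pow_mul]))
  have hdvd2 : g.natDegree ∣ 2 := by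
    refine hg.natDegree_dvd_char_of_dvd_X_pow_sub_X_sub_C (k := 2 * m + 1) (c := c) (hq2 ▸ hF) ?_
    rwa [CharTwo.sub_eq_add, CharTwo.sub_eq_add, ← hq2]
  have hdeg1 : g.natDegree ≠ 1 := by
    intro h1
    obtain ⟨y, hy⟩ :=
      exists_root_of_degree_eq_one ((degree_eq_iff_natDegree_eq_of_pos one_pos).mpr h1)
    exact hroot ⟨y, by simpa using hy.dvd hdvd⟩
  exact ((Nat.dvd_prime Nat.prime_two).mp hdvd2).resolve_left hdeg1

theorem suzuki_nonsplit_fiber_factors_into_quadratics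
    (m q₀ q : ℕ) (hm : 1 ≤ m) (hq₀ : q₀ = 2 ^ m) (hq : q = 2 * q₀ ^ 2)
    (F : Type*) [Field F] [Fintype F] (hF : Fintype.card F = q ^ 4)
    (α : F) (c : F) (hc : c = α ^ (q₀ + q) + α ^ (q₀ + 1))
    (hroot : ¬ ∃ y : F, y ^ q + y + c = 0) :
    ∀ p : Polynomial F, p.Monic → Irreducible p →
      p ∣ (Polynomial.X ^ q + Polynomial.X + Polynomial.C c) → p.natDegree = 2 :=
  suzuki_nonsplit_fiber_factors_into_quadratics_general m q₀ q hq₀ hq F hF c hroot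
end
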